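/- arXiv:q-alg/9703018 — 6 statements merged into one kernel-verified Lean document; each statement's English description precedes it below -/
import Mathlib

section
/- Let z, λ, γ ∈ ℂ with θ(z+γ) ≠ 0, θ(z−γ) ≠ 0 and θ(λ) ≠ 0. Then R⁺(z,λ) · R⁻(z,λ) = Id and R⁻(z,λ) · R⁺(z,λ) = Id on V ⊗ V; i.e., the explicit matrix R⁺(z,λ) is the inverse of R⁻(z,λ). -/
noncomputable section
open Complex Matrix Kronecker

/-- The lattice `L = ℤ + τℤ`. -/
def LatSet (τ : ℂ) : Set ℂ := {z | ∃ m n : ℤ, z = (m : ℂ) + (n : ℂ) * τ}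

/-- `θ` is the theta function of the paper: entire, `θ′(0) = 1`, zero set exactly `L`,
`θ(z+1) = −θ(z)` and `θ(z+τ) = −e^{−iπτ} e^{−2iπz} θ(z)`. -/
def IsTheta (τ : ℂ) (θ : ℂ → ℂ) : Prop :=
  Differentiable ℂ θ ∧ deriv θ 0 = 1 ∧ (∀ z, θ z = 0 ↔ z ∈ LatSet τ) ∧
    (∀ z, θ (z + 1) = -θ z) ∧
    (∀ z, θ (z + τ) = -Complex.exp (-((Real.pi : ℂ) * Complex.I * τ)) *
      Complex.exp (-(2 * (Real.pi : ℂ) * Complex.I * z)) * θ z)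

/-- Matrix unit `E_{ab}` on `V = ℂ²`; index `0` corresponds to `v₁`, index `1` to `v₋₁`. -/
def Em (a b : Fin 2) : Matrix (Fin 2) (Fin 2) ℂ := Matrix.single a b 1

/-- The sign of a basis index: `v₁ ↦ 1`, `v₋₁ ↦ -1` (eigenvalue of `h`). -/
def sgn (a : Fin 2) : ℂ := if a = 0 then 1 else -1

/-- The elliptic dynamical R-matrix `R⁻(z,μ)` (with dynamical parameter `γ`). -/
def Rminus (θ : ℂ → ℂ) (γ z μ : ℂ) : Matrix (Fin 2 × Fin 2) (Fin 2 × Fin 2) ℂ :=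
  Em 0 0 ⊗ₖ Em 0 0 + Em 1 1 ⊗ₖ Em 1 1
    + (θ z / θ (z + γ)) • (Em 0 0 ⊗ₖ Em 1 1)
    + (θ (μ - γ) * θ (μ + γ) * θ z / (θ μ ^ 2 * θ (z + γ))) • (Em 1 1 ⊗ₖ Em 0 0)
    + (θ (z + μ) * θ γ / (θ (z + γ) * θ μ)) • (Em 0 1 ⊗ₖ Em 1 0)
    - (θ (z - μ) * θ γ / (θ (z + γ) * θ μ)) • (Em 1 0 ⊗ₖ Em 0 1)

/-- The elliptic dynamical R-matrix `R⁺(z,λ)` (with dynamical parameter `γ`). -/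
def Rplus (θ : ℂ → ℂ) (γ z lam : ℂ) : Matrix (Fin 2 × Fin 2) (Fin 2 × Fin 2) ℂ :=
  Em 0 0 ⊗ₖ Em 0 0 + Em 1 1 ⊗ₖ Em 1 1
    + (θ z * θ (lam - γ) * θ (lam + γ) / (θ (z - γ) * θ lam ^ 2)) • (Em 0 0 ⊗ₖ Em 1 1)
    + (θ z / θ (z - γ)) • (Em 1 1 ⊗ₖ Em 0 0)
    - (θ (z + lam) * θ γ / (θ (z - γ) * θ lam)) • (Em 0 1 ⊗ₖ Em 1 0)
    + (θ (z - lam) * θ γ / (θ (z - γ) * θ lam)) • (Em 1 0 ⊗ₖ Em 0 1)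

open Filter Topology Set Bornology

lemma lat_add_one {τ z : ℂ} : z + 1 ∈ LatSet τ ↔ z ∈ LatSet τ := by
  constructor
  · rintro ⟨m, n, h⟩; exact ⟨m - 1, n, by push_cast; linear_combination h⟩
  · rintro ⟨m, n, h⟩; exact ⟨m + 1, n, by push_cast; linear_combination h⟩

lemma lat_add_tau {τ z : ℂ} : z + τ ∈ LatSet τ ↔ z ∈ LatSet τ := by
  constructor
  · rintro ⟨m, n, h⟩; exact ⟨m, n - 1, by push_cast; linear_combination h⟩
  · rintro ⟨m, n, h⟩; exact ⟨m, n + 1, by push_cast; linear_combination h⟩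

lemma half_not_lat {τ : ℂ} (hτ : 0 < τ.im) : (1/2 : ℂ) ∉ LatSet τ := by
  rintro ⟨m, n, h⟩
  have him := congrArg Complex.im h
  simp [Complex.add_im, Complex.mul_im] at him
  rcases him with him | him
  · rw [him] at h
    simp at h
    have h2 : ((2 * m : ℤ) : ℂ) = 1 := by push_cast; linear_combination -2 * h
    have h3 : (2 * m : ℤ) = 1 := by exact_mod_cast h2
    omega
  · exact absurd him (ne_of_gt hτ)

lemma elliptic_quot (τ : ℂ) (hτ : 0 < τ.im) (f g : ℂ → ℂ)
    (hf : Differentiable ℂ f) (hg : Differentiable ℂ g)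
    (hzero : ∀ w, g w = 0 ↔ w ∈ LatSet τ)
    (hp1 : ∀ w, f w * g (w + 1) = f (w + 1) * g w)
    (hpτ : ∀ w, f w * g (w + τ) = f (w + τ) * g w)
    (c₀ : ℂ) (hc : Tendsto (fun w => f w / g w) (𝓝[≠] (0:ℂ)) (𝓝 c₀)) :
    ∀ w, f w = c₀ * g w := by
  classical
  have ghalf : g (1/2) ≠ 0 := fun h => half_not_lat hτ ((hzero _).1 h)
  set H : ℂ → ℂ := fun w => if g w = 0 then c₀ else f w / g w with hH
  have gne : ∀ p : ℂ, ∀ᶠ w in 𝓝[≠] p, g w ≠ 0 := by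
    intro p
    rcases (hg.analyticAt p).eventually_eq_zero_or_eventually_ne_zero with h | h
    · exfalso
      have hA : AnalyticOnNhd ℂ g univ := fun x _ => hg.analyticAt x
      have := hA.eqOn_zero_of_preconnected_of_eventuallyEq_zero isPreconnected_univ
        (mem_univ p) h
      exact ghalf (this (mem_univ _))
    · exact h
  have per1 : ∀ w, H (w + 1) = H w := by
    intro w
    by_cases h : g w = 0
    · have h1 : g (w + 1) = 0 := (hzero _).2 (lat_add_one.2 ((hzero _).1 h))
      simp [hH, h, h1]
    · have h1 : g (w + 1) ≠ 0 := fun hh => h ((hzero _).2 (lat_add_one.1 ((hzero _).1 hh)))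
      simp only [hH, if_neg h, if_neg h1]
      rw [div_eq_div_iff h1 h]
      linear_combination - hp1 w
  have pert : ∀ w, H (w + τ) = H w := by
    intro w
    by_cases h : g w = 0
    · have h1 : g (w + τ) = 0 := (hzero _).2 (lat_add_tau.2 ((hzero _).1 h))
      simp [hH, h, h1]
    · have h1 : g (w + τ) ≠ 0 := fun hh => h ((hzero _).2 (lat_add_tau.1 ((hzero _).1 hh)))
      simp only [hH, if_neg h, if_neg h1]
      rw [div_eq_div_iff h1 h]
      linear_combination - hpτ w
  have perm : ∀ (m : ℤ) (w : ℂ), H (w + m) = H w := by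
    intro m
    induction m using Int.induction_on with
    | zero => simp
    | succ i ih =>
        intro w
        push_cast
        rw [show w + ((i : ℂ) + 1) = (w + i) + 1 by ring, per1]
        have := ih w
        push_cast at this
        exact this
    | pred i ih =>
        intro w
        push_cast
        have h1 := per1 (w + (-(i : ℂ) - 1))
        rw [show w + (-(i : ℂ) - 1) + 1 = w + -(i : ℂ) by ring] at h1
        have h2 := ih w
        push_cast at h2
        rw [← h1]
        exact h2
  have pern : ∀ (n : ℤ) (w : ℂ), H (w + n * τ) = H w := by
    intro n
    induction n using Int.induction_on with
    | zero => simp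
    | succ i ih =>
        intro w
        push_cast
        rw [show w + ((i : ℂ) + 1) * τ = (w + i * τ) + τ by ring, pert]
        have := ih w
        push_cast at this
        exact this
    | pred i ih =>
        intro w
        push_cast
        have h1 := pert (w + (-(i : ℂ) - 1) * τ)
        rw [show w + (-(i : ℂ) - 1) * τ + τ = w + -(i : ℂ) * τ by ring] at h1
        have h2 := ih w
        push_cast at h2
        rw [← h1]
        exact h2
  have latshift : ∀ p ∈ LatSet τ, ∀ w, H (w + p) = H w := by
    rintro p ⟨m, n, rfl⟩ w
    rw [show w + ((m : ℂ) + n * τ) = (w + m) + n * τ by ring, pern, perm]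
  have hdiff_ne : ∀ w, g w ≠ 0 → DifferentiableAt ℂ H w := by
    intro w hw
    have heq : H =ᶠ[𝓝 w] fun x => f x / g x := by
      filter_upwards [(isOpen_compl_singleton.preimage hg.continuous).mem_nhds hw] with x hx
      simp only [Set.mem_preimage, Set.mem_compl_iff, Set.mem_singleton_iff] at hx
      simp only [hH]
      rw [if_neg hx]
    exact heq.differentiableAt_iff.2 ((hf.differentiableAt).div (hg.differentiableAt) hw)
  have hg0 : g 0 = 0 := (hzero 0).2 ⟨0, 0, by simp⟩
  have hH0 : H 0 = c₀ := by simp [hH, hg0]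
  have hcont0 : ContinuousAt H 0 := by
    have htend : Tendsto H (𝓝[≠] (0:ℂ)) (𝓝 c₀) := by
      refine hc.congr' ?_
      filter_upwards [gne 0] with x hx
      simp only [hH]; rw [if_neg hx]
    have h2 : Tendsto H (𝓝 (0:ℂ)) (𝓝 c₀) := by
      rw [← nhdsNE_sup_pure]
      refine htend.sup ?_
      simpa [hH0] using tendsto_pure_nhds H (0:ℂ)
    simpa [ContinuousAt, hH0] using h2
  have hdiff0 : DifferentiableAt ℂ H 0 := by
    refine (Complex.analyticAt_of_differentiable_on_punctured_nhds_of_continuousAt ?_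
      hcont0).differentiableAt
    filter_upwards [gne 0] with x hx using hdiff_ne x hx
  have hdiffAll : Differentiable ℂ H := by
    intro w
    by_cases hw : g w = 0
    · have hwL : w ∈ LatSet τ := (hzero w).1 hw
      have key : H = fun x => H (x - w) := by
        funext x
        conv_lhs => rw [show x = (x - w) + w by ring]
        exact latshift w hwL (x - w)
      rw [key]
      have h2 : DifferentiableAt ℂ (fun x : ℂ => x - w) w := (differentiable_id.sub_const w) w
      have h1 : DifferentiableAt ℂ H ((fun x : ℂ => x - w) w) := by simpa using hdiff0
      have hcomp : DifferentiableAt ℂ (H ∘ fun x : ℂ => x - w) w := DifferentiableAt.comp w h1 h2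
      simpa [Function.comp_def] using hcomp
    · exact hdiff_ne w hw
  have him : τ.im ≠ 0 := ne_of_gt hτ
  set K : Set ℂ := (fun p : ℝ × ℝ => (p.1 : ℂ) + (p.2 : ℂ) * τ) '' (Icc (0:ℝ) 1 ×ˢ Icc (0:ℝ) 1)
    with hK
  have hKc : IsCompact K := (isCompact_Icc.prod isCompact_Icc).image (by continuity)
  have hrange : range H ⊆ H '' K := by
    rintro _ ⟨zz, rfl⟩
    set b : ℝ := zz.im / τ.im with hb
    set a : ℝ := zz.re - b * τ.re with ha
    have hzz : zz = (a : ℂ) + (b : ℂ) * τ := by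
      apply Complex.ext
      · simp [ha, Complex.add_re, Complex.mul_re]
      · simp [Complex.add_im, Complex.mul_im]
        rw [hb, div_mul_cancel₀ _ him]
    have hfa : ((Int.fract a : ℝ) : ℂ) = (a : ℂ) - ((⌊a⌋ : ℤ) : ℂ) := by
      rw [← Int.self_sub_floor]; push_cast; ring
    have hfb : ((Int.fract b : ℝ) : ℂ) = (b : ℂ) - ((⌊b⌋ : ℤ) : ℂ) := by
      rw [← Int.self_sub_floor]; push_cast; ring
    have hsplit : zz = (((Int.fract a : ℝ) : ℂ) + ((Int.fract b : ℝ) : ℂ) * τ)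
        + (((⌊a⌋ : ℤ) : ℂ) + ((⌊b⌋ : ℤ) : ℂ) * τ) := by
      rw [hfa, hfb, hzz]; ring
    refine ⟨((Int.fract a : ℝ) : ℂ) + ((Int.fract b : ℝ) : ℂ) * τ,
      ⟨(Int.fract a, Int.fract b),
        ⟨⟨Int.fract_nonneg a, (Int.fract_lt_one a).le⟩,
         ⟨Int.fract_nonneg b, (Int.fract_lt_one b).le⟩⟩, rfl⟩, ?_⟩
    conv_rhs => rw [hsplit]
    exact (latshift _ ⟨⌊a⌋, ⌊b⌋, rfl⟩ _).symm
  have hbd : IsBounded (range H) := ((hKc.image hdiffAll.continuous).isBounded).subset hrange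
  have hend : ∀ w, H w = c₀ := fun w => by
    rw [hdiffAll.apply_eq_apply_of_bounded hbd w 0, hH0]
  have hdense : Dense {w : ℂ | g w ≠ 0} := by
    intro w
    by_cases h : g w = 0
    · rw [mem_closure_iff_frequently]
      exact Filter.Frequently.filter_mono ((gne w).frequently) nhdsWithin_le_nhds
    · exact subset_closure h
  have hfin : f = fun w => c₀ * g w := by
    refine Continuous.ext_on hdense hf.continuous (continuous_const.mul hg.continuous) ?_
    intro x hx
    have hx' : g x ≠ 0 := hx
    have h := hend x
    simp only [hH] at h
    rw [if_neg hx', div_eq_iff hx'] at h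
    simpa [mul_comm] using h
  exact fun w => congrFun hfin w

lemma theta_odd (τ : ℂ) (hτ : 0 < τ.im) (θ : ℂ → ℂ) (hθ : IsTheta τ θ) :
    ∀ w, θ (-w) = - θ w := by
  obtain ⟨hdiff, hderiv, hzero, h4, h5⟩ := hθ
  have hθ0 : θ 0 = 0 := (hzero 0).2 ⟨0, 0, by simp⟩
  have hθeq : ∀ w : ℂ, θ w = w * dslope θ 0 w := by
    intro w
    have := sub_smul_dslope θ 0 w
    rw [smul_eq_mul, hθ0, sub_zero, sub_zero] at this
    exact this.symm
  have hdc : ContinuousAt (dslope θ 0) 0 := continuousAt_dslope_same.2 (hdiff.differentiableAt)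
  have hd0 : dslope θ 0 0 = 1 := by rw [dslope_same, hderiv]
  have h := elliptic_quot τ hτ (fun w => θ (-w)) θ
    (hdiff.comp differentiable_neg) hdiff hzero
    (by
      intro w
      show θ (-w) * θ (w + 1) = θ (-(w + 1)) * θ w
      have e := h4 (-w - 1)
      rw [show -w - 1 + 1 = -w by ring] at e
      rw [h4 w, show -(w + 1) = -w - 1 by ring]
      linear_combination (-(θ w)) * e)
    (by
      intro w
      show θ (-w) * θ (w + τ) = θ (-(w + τ)) * θ w
      have e := h5 (-w - τ)
      rw [show -w - τ + τ = -w by ring] at e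
      rw [h5 w, show -(w + τ) = -w - τ by ring, e]
      have hE : (-cexp (-((Real.pi:ℂ) * I * τ)) * cexp (-(2 * (Real.pi:ℂ) * I * (-w - τ))))
          * (-cexp (-((Real.pi:ℂ) * I * τ)) * cexp (-(2 * (Real.pi:ℂ) * I * w))) = 1 := by
        rw [show (-cexp (-((Real.pi:ℂ) * I * τ)) * cexp (-(2 * (Real.pi:ℂ) * I * (-w - τ))))
            * (-cexp (-((Real.pi:ℂ) * I * τ)) * cexp (-(2 * (Real.pi:ℂ) * I * w)))
            = cexp (-((Real.pi:ℂ) * I * τ)) * cexp (-(2 * (Real.pi:ℂ) * I * (-w - τ)))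
            * cexp (-((Real.pi:ℂ) * I * τ)) * cexp (-(2 * (Real.pi:ℂ) * I * w)) by ring,
          ← Complex.exp_add, ← Complex.exp_add, ← Complex.exp_add,
          show -((Real.pi:ℂ) * I * τ) + -(2 * (Real.pi:ℂ) * I * (-w - τ))
            + -((Real.pi:ℂ) * I * τ) + -(2 * (Real.pi:ℂ) * I * w) = 0 by ring,
          Complex.exp_zero]
      linear_combination (θ (-w - τ) * θ w) * hE)
    (-1)
    (by
      have hmain : Tendsto (fun w : ℂ => -(dslope θ 0 (-w) / dslope θ 0 w)) (𝓝 (0:ℂ))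
          (𝓝 (-1)) := by
        have hneg : Tendsto (fun w : ℂ => -w) (𝓝 (0:ℂ)) (𝓝 (0:ℂ)) := by
          simpa using (continuous_neg.tendsto (0:ℂ))
        have hnegd : Tendsto (fun w : ℂ => dslope θ 0 (-w)) (𝓝 (0:ℂ)) (𝓝 (dslope θ 0 0)) := by
          have := Filter.Tendsto.comp (g := dslope θ 0) hdc hneg
          simpa [Function.comp_def] using this
        have h2 := Filter.Tendsto.neg
          (Filter.Tendsto.div hnegd hdc (by rw [hd0]; exact one_ne_zero))
        simpa [dslope_same, hderiv] using h2
      refine (hmain.mono_left nhdsWithin_le_nhds).congr' ?_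
      filter_upwards [self_mem_nhdsWithin] with x hx
      have hx' : x ≠ 0 := hx
      calc -(dslope θ 0 (-x) / dslope θ 0 x)
          = -((x * dslope θ 0 (-x)) / (x * dslope θ 0 x)) := by
            rw [mul_div_mul_left _ _ hx']
        _ = (-x * dslope θ 0 (-x)) / (x * dslope θ 0 x) := by
            ring
        _ = θ (-x) / θ x := by rw [← hθeq, ← hθeq])
  intro w
  have := h w
  simpa using this

lemma theta_star (τ : ℂ) (hτ : 0 < τ.im) (θ : ℂ → ℂ) (hθ : IsTheta τ θ)
    (lam γ : ℂ) (hlam : θ lam ≠ 0) (z : ℂ) :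
    θ (z + γ) * θ (z - γ) * θ lam ^ 2
      = θ z ^ 2 * θ (lam - γ) * θ (lam + γ) + θ (z + lam) * θ (z - lam) * θ γ ^ 2 := by
  have hodd := theta_odd τ hτ θ hθ
  obtain ⟨hdiff, hderiv, hzero, h4, h5⟩ := hθ
  have hθ0 : θ 0 = 0 := (hzero 0).2 ⟨0, 0, by simp⟩
  have hθeq : ∀ w : ℂ, θ w = w * dslope θ 0 w := by
    intro w
    have := sub_smul_dslope θ 0 w
    rw [smul_eq_mul, hθ0, sub_zero, sub_zero] at this
    exact this.symm
  have hdc : ContinuousAt (dslope θ 0) 0 := continuousAt_dslope_same.2 (hdiff.differentiableAt)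
  have hd0 : dslope θ 0 0 = 1 := by rw [dslope_same, hderiv]
  set F : ℂ → ℂ := fun w => θ (w + γ) * θ (w + -γ) * θ lam ^ 2
      - θ w ^ 2 * θ (lam - γ) * θ (lam + γ)
      - θ (w + lam) * θ (w + -lam) * θ γ ^ 2 with hF
  have hFdiff : Differentiable ℂ F := by
    apply Differentiable.sub
    apply Differentiable.sub
    · exact (((hdiff.comp (differentiable_id.add_const γ)).mul
        (hdiff.comp (differentiable_id.add_const (-γ)))).mul_const _)
    · exact (((hdiff.pow 2).mul_const _).mul_const _)
    · exact (((hdiff.comp (differentiable_id.add_const lam)).mul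
        (hdiff.comp (differentiable_id.add_const (-lam)))).mul_const _)
  have hF0 : F 0 = 0 := by
    simp only [hF, zero_add, hθ0]
    rw [hodd γ, hodd lam]
    ring
  have hFeven : ∀ w, F (-w) = F w := by
    intro w
    simp only [hF]
    rw [show -w + γ = -(w + -γ) by ring, show -w + -γ = -(w + γ) by ring,
      show -w + lam = -(w + -lam) by ring, show -w + -lam = -(w + lam) by ring,
      hodd (w + -γ), hodd (w + γ), hodd (w + -lam), hodd (w + lam), hodd w]
    ring
  have hderivF0 : deriv F 0 = 0 := by
    have heq : (fun x => F (-x)) = F := funext hFeven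
    have h1 : deriv (fun x => F (-x)) 0 = deriv F 0 := by rw [heq]
    rw [deriv_comp_neg, neg_zero] at h1
    linear_combination (-1/2 : ℂ) * h1
  have hd10 : dslope F 0 0 = 0 := by rw [dslope_same, hderivF0]
  have hF_fac : ∀ w, F w = w ^ 2 * dslope (dslope F 0) 0 w := by
    intro w
    have e1 := sub_smul_dslope F 0 w
    have e2 := sub_smul_dslope (dslope F 0) 0 w
    rw [smul_eq_mul, hF0, sub_zero, sub_zero] at e1
    rw [smul_eq_mul, hd10, sub_zero, sub_zero] at e2
    rw [← e1, ← e2]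
    ring
  obtain ⟨p, hp⟩ := hFdiff.analyticAt 0
  have hdd_cont : ContinuousAt (dslope (dslope F 0) 0) 0 := by
    have h1 := hp.has_fpower_series_dslope_fslope
    have h2 := h1.has_fpower_series_dslope_fslope
    exact h2.analyticAt.continuousAt
  have key := elliptic_quot τ hτ F (fun w => θ w ^ 2) hFdiff (hdiff.pow 2)
    (by
      intro w
      rw [pow_eq_zero_iff (two_ne_zero)]
      exact hzero w)
    (by
      intro w
      show F w * θ (w + 1) ^ 2 = F (w + 1) * θ w ^ 2
      have s1 : ∀ x : ℂ, θ (w + 1 + x) = -θ (w + x) := by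
        intro x
        rw [show w + 1 + x = (w + x) + 1 by ring, h4]
      have hFs : F (w + 1) = F w := by
        simp only [hF]
        rw [s1 γ, s1 (-γ), s1 lam, s1 (-lam), h4 w]
        ring
      rw [hFs, h4 w]
      ring)
    (by
      intro w
      show F w * θ (w + τ) ^ 2 = F (w + τ) * θ w ^ 2
      have s2 : ∀ x : ℂ, θ (w + τ + x)
          = -cexp (-((Real.pi:ℂ) * I * τ)) * cexp (-(2 * (Real.pi:ℂ) * I * (w + x))) * θ (w + x) := by
        intro x
        rw [show w + τ + x = (w + x) + τ by ring, h5]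
      have epair : ∀ x : ℂ, cexp (-(2 * (Real.pi:ℂ) * I * (w + x)))
          * cexp (-(2 * (Real.pi:ℂ) * I * (w + -x))) = cexp (-(2 * (Real.pi:ℂ) * I * w)) ^ 2 := by
        intro x
        rw [sq, ← Complex.exp_add, ← Complex.exp_add]
        congr 1
        ring
      have hFτ : F (w + τ) = cexp (-((Real.pi:ℂ) * I * τ)) ^ 2
          * cexp (-(2 * (Real.pi:ℂ) * I * w)) ^ 2 * F w := by
        simp only [hF]
        rw [s2 γ, s2 (-γ), s2 lam, s2 (-lam), h5 w]
        have e1 := epair γ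
        have e2 := epair lam
        linear_combination (cexp (-((Real.pi:ℂ) * I * τ)) ^ 2 * θ lam ^ 2 * θ (w + γ) * θ (w + -γ)) * e1
          - (cexp (-((Real.pi:ℂ) * I * τ)) ^ 2 * θ γ ^ 2 * θ (w + lam) * θ (w + -lam)) * e2
      rw [hFτ, h5 w]
      ring)
    (dslope (dslope F 0) 0 0)
    (by
      have hmain : Tendsto (fun w : ℂ => dslope (dslope F 0) 0 w / (dslope θ 0 w) ^ 2)
          (𝓝 (0:ℂ)) (𝓝 (dslope (dslope F 0) 0 0)) := by
        have hpow : Tendsto (fun w : ℂ => dslope θ 0 w ^ 2) (𝓝 (0:ℂ))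
            (𝓝 (dslope θ 0 0 ^ 2)) := (hdc.pow 2 : ContinuousAt _ _)
        have h2 := Filter.Tendsto.div hdd_cont hpow (by rw [hd0]; norm_num)
        simp only [hd0, one_pow, div_one] at h2
        exact h2
      refine (hmain.mono_left nhdsWithin_le_nhds).congr' ?_
      filter_upwards [self_mem_nhdsWithin] with x hx
      have hx' : x ≠ 0 := hx
      rw [hF_fac x, hθeq x, mul_pow, mul_div_mul_left _ _ (pow_ne_zero 2 hx')])
  have hFlam : F lam = 0 := by
    simp only [hF]
    rw [show lam + -lam = (0:ℂ) by ring, hθ0]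
    ring
  have hc0 : dslope (dslope F 0) 0 0 = 0 := by
    have h := key lam
    rw [hFlam] at h
    have h2 : dslope (dslope F 0) 0 0 * θ lam ^ 2 = 0 := h.symm
    rcases mul_eq_zero.1 h2 with h3 | h3
    · exact h3
    · exact absurd (pow_eq_zero_iff (two_ne_zero) |>.1 h3) hlam
  have hid := key z
  rw [hc0, zero_mul] at hid
  simp only [hF] at hid
  rw [show z + -γ = z - γ by ring, show z + -lam = z - lam by ring] at hid
  linear_combination hid

set_option maxHeartbeats 2000000 in
/-- `R⁺(z,λ)` is the two-sided inverse of `R⁻(z,λ)`. -/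
theorem Rplus_mul_Rminus_eq_one
    (τ : ℂ) (hτ : 0 < τ.im) (θ : ℂ → ℂ) (hθ : IsTheta τ θ)
    (z lam γ : ℂ) (h1 : θ (z + γ) ≠ 0) (h2 : θ (z - γ) ≠ 0) (h3 : θ lam ≠ 0) :
    Rplus θ γ z lam * Rminus θ γ z lam = 1 ∧
    Rminus θ γ z lam * Rplus θ γ z lam = 1 := by
  have star := theta_star τ hτ θ hθ lam γ h3 z
  constructor <;>
  · ext ⟨i, j⟩ ⟨k, l⟩
    fin_cases i <;> fin_cases j <;> fin_cases k <;> fin_cases l <;>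
      simp [Rplus, Rminus, Em, Matrix.mul_apply, Fintype.sum_prod_type, Fin.sum_univ_two,
        Matrix.single, Matrix.one_apply, Prod.ext_iff] <;>
      field_simp <;>
      first
      | ring1
      | linear_combination star
      | linear_combination -star
      | (rw [div_eq_one_iff_eq (by simp [h1, h2, h3, mul_eq_zero])]
         first
         | linear_combination (θ (z-γ) * θ lam^2 * θ (z+γ)) * star
         | linear_combination (-(θ (z-γ) * θ lam^2 * θ (z+γ))) * star)
end
end

section
/- Let z, μ, ħ ∈ ℂ with θ(z) ≠ 0, θ(z−ħ) ≠ 0 and θ(μ) ≠ 0, and set γ = −ħ. Then the following Gauss decomposition of the elliptic R-matrix holds in End(V⊗V): (Id + (θ(ħ)θ(μ−z)/(θ(−z)θ(μ))) E₋₁,₁⊗E₁,₋₁) · (E₁₁⊗E₁₁ + E₋₁₋₁⊗E₋₁₋₁ + (θ(−z)/θ(−z+ħ)) E₁₁⊗E₋₁₋₁ + (θ(−z−ħ)/θ(−z)) E₋₁₋₁⊗E₁₁) · (Id − (θ(ħ)θ(z+μ)/(θ(z)θ(μ))) E₁,₋₁⊗E₋₁,₁) = R⁻(z,μ), where R⁻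 is taken with parameter γ = −ħ. -/
noncomputable section
open Complex Matrix Kronecker

namespace GaussAux


/-- iterate a quasi-periodicity step with differentiable nonvanishing multiplier -/
lemma translate_unit (φ : ℂ → ℂ) (p : ℂ)
    (h : ∃ e : ℂ → ℂ, Differentiable ℂ e ∧ (∀ z, e z ≠ 0) ∧ ∀ z, φ (z + p) = e z * φ z)
    (k : ℤ) :
    ∃ u : ℂ → ℂ, Differentiable ℂ u ∧ (∀ z, u z ≠ 0) ∧
      ∀ z, φ (z + (k : ℂ) * p) = u z * φ z := by
  obtain ⟨e, he, hne, heq⟩ := h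
  induction k using Int.induction_on with
  | zero => exact ⟨fun _ => 1, differentiable_const 1, fun _ => one_ne_zero, by simp⟩
  | succ k ih =>
      obtain ⟨u, hu, hun, huq⟩ := ih
      refine ⟨fun z => e (z + ((k : ℤ) : ℂ) * p) * u z,
        (he.comp ((differentiable_id).add_const _)).mul hu,
        fun z => mul_ne_zero (hne _) (hun _), fun z => ?_⟩
      have hgoal : z + (((k : ℤ) + 1 : ℤ) : ℂ) * p = (z + ((k : ℤ) : ℂ) * p) + p := by
        push_cast; ring
      rw [hgoal, heq, huq]; ring
  | pred k ih =>
      obtain ⟨u, hu, hun, huq⟩ := ih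
      refine ⟨fun z => (e (z + (-((k : ℤ) : ℂ) - 1) * p))⁻¹ * u z,
        ((he.comp ((differentiable_id).add_const _)).inv fun z => hne _).mul hu,
        fun z => mul_ne_zero (inv_ne_zero (hne _)) (hun _), fun z => ?_⟩
      have hstep := heq (z + (-((k : ℤ) : ℂ) - 1) * p)
      rw [show z + (-((k : ℤ) : ℂ) - 1) * p + p = z + (-((k : ℤ) : ℂ)) * p by ring] at hstep
      have hval : φ (z + (-((k : ℤ) : ℂ)) * p) = u z * φ z := by
        have := huq z
        rwa [show ((-(k : ℤ) : ℤ) : ℂ) = -((k : ℤ) : ℂ) by push_cast; ring] at this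
      rw [show (((-(k : ℤ) - 1 : ℤ)) : ℂ) = -((k : ℤ) : ℂ) - 1 by push_cast; ring]
      have hkey : φ (z + (-((k : ℤ) : ℂ) - 1) * p)
          = (e (z + (-((k : ℤ) : ℂ) - 1) * p))⁻¹ * (u z * φ z) := by
        rw [← hval, hstep, inv_mul_cancel_left₀ (hne _)]
      rw [hkey]; ring

lemma translate_unit₂ (τ : ℂ) (φ : ℂ → ℂ)
    (h1 : ∃ e : ℂ → ℂ, Differentiable ℂ e ∧ (∀ z, e z ≠ 0) ∧ ∀ z, φ (z + 1) = e z * φ z)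
    (h2 : ∃ e : ℂ → ℂ, Differentiable ℂ e ∧ (∀ z, e z ≠ 0) ∧ ∀ z, φ (z + τ) = e z * φ z)
    (m n : ℤ) :
    ∃ u : ℂ → ℂ, Differentiable ℂ u ∧ (∀ z, u z ≠ 0) ∧
      ∀ z, φ (z + ((m : ℂ) + (n : ℂ) * τ)) = u z * φ z := by
  obtain ⟨u, hu, hun, huq⟩ := translate_unit φ 1 h1 m
  obtain ⟨v, hv, hvn, hvq⟩ := translate_unit φ τ h2 n
  refine ⟨fun z => u (z + (n : ℂ) * τ) * v z,
    (hu.comp ((differentiable_id).add_const _)).mul hv,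
    fun z => mul_ne_zero (hun _) (hvn _), fun z => ?_⟩
  have : z + ((m : ℂ) + (n : ℂ) * τ) = (z + (n : ℂ) * τ) + (m : ℂ) * 1 := by ring
  rw [this, huq, hvq]; ring



lemma ratio_const {τ : ℂ} (hτ : 0 < τ.im) (F G : ℂ → ℂ)
    (hF : Differentiable ℂ F) (hG : Differentiable ℂ G)
    (hz : ∀ w, G w = 0 → F w = 0) (hz' : ∀ w, G w = 0 → deriv G w ≠ 0)
    (h1 : ∃ u : ℂ → ℂ, Differentiable ℂ u ∧ (∀ z, u z ≠ 0) ∧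
      (∀ z, F (z + 1) = u z * F z) ∧ (∀ z, G (z + 1) = u z * G z))
    (h2 : ∃ u : ℂ → ℂ, Differentiable ℂ u ∧ (∀ z, u z ≠ 0) ∧
      (∀ z, F (z + τ) = u z * F z) ∧ (∀ z, G (z + τ) = u z * G z)) :
    ∃ c : ℂ, ∀ z, F z = c * G z := by
  classical
  set H : ℂ → ℂ := fun z => if G z = 0 then deriv F z / deriv G z else F z / G z with hHdef
  have hHdiff : Differentiable ℂ H := by
    intro w
    by_cases hw : G w = 0
    · have hF0 : F w = 0 := hz w hw
      have hG' : deriv G w ≠ 0 := hz' w hw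
      have hdF : Differentiable ℂ (dslope F w) := by
        rw [← differentiableOn_univ] at hF ⊢
        exact (Complex.differentiableOn_dslope (Filter.univ_mem)).mpr hF
      have hdG : Differentiable ℂ (dslope G w) := by
        rw [← differentiableOn_univ] at hG ⊢
        exact (Complex.differentiableOn_dslope (Filter.univ_mem)).mpr hG
      have hden : dslope G w w ≠ 0 := by rwa [dslope_same]
      have hpunct : ∀ᶠ z in nhdsWithin w {w}ᶜ, G z ≠ 0 := by
        rcases (hG.analyticAt w).eventually_eq_zero_or_eventually_ne_zero with hcase | hcase
        · exact absurd (by rw [Filter.EventuallyEq.deriv_eq hcase]; simp) hG'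
        · exact hcase
      have hratio : DifferentiableAt ℂ (fun z => dslope F w z / dslope G w z) w :=
        (hdF w).div (hdG w) hden
      apply hratio.congr_of_eventuallyEq
      filter_upwards [eventually_nhdsWithin_iff.mp hpunct] with z hzimp
      by_cases hzw : z = w
      · subst hzw; simp [hHdef, hw, dslope_same]
      · have hGz : G z ≠ 0 := hzimp hzw
        have hzw' : z - w ≠ 0 := sub_ne_zero.mpr hzw
        simp only [hHdef, if_neg hGz]
        rw [dslope_of_ne _ hzw, dslope_of_ne _ hzw, slope_def_field, slope_def_field,
          hF0, hw, sub_zero, sub_zero]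
        field_simp
    · have hev : ∀ᶠ z in nhds w, G z ≠ 0 := hG.continuous.continuousAt.eventually_ne hw
      have hdiv : DifferentiableAt ℂ (fun z => F z / G z) w := (hF w).div (hG w) hw
      apply hdiv.congr_of_eventuallyEq
      filter_upwards [hev] with z hGz
      simp [hHdef, hGz]
  have key : ∀ p : ℂ, (∃ u : ℂ → ℂ, Differentiable ℂ u ∧ (∀ z, u z ≠ 0) ∧
      (∀ z, F (z + p) = u z * F z) ∧ (∀ z, G (z + p) = u z * G z)) →
      ∀ z, H (z + p) = H z := by
    rintro p ⟨u, hu, hun, huF, huG⟩ z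
    by_cases hGz : G z = 0
    · have hGzp : G (z + p) = 0 := by rw [huG, hGz, mul_zero]
      have hFz : F z = 0 := hz z hGz
      have hdF : deriv F (z + p) = u z * deriv F z := by
        have hfun : (fun y => F (y + p)) = fun y => u y * F y := funext huF
        have hcg := congrArg (fun f : ℂ → ℂ => deriv f z) hfun
        rw [deriv_comp_add_const] at hcg
        rw [hcg, deriv_fun_mul (hu z) (hF z), hFz, mul_zero, zero_add]
      have hdG : deriv G (z + p) = u z * deriv G z := by
        have hfun : (fun y => G (y + p)) = fun y => u y * G y := funext huG
        have hcg := congrArg (fun f : ℂ → ℂ => deriv f z) hfun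
        rw [deriv_comp_add_const] at hcg
        rw [hcg, deriv_fun_mul (hu z) (hG z), hGz, mul_zero, zero_add]
      simp only [hHdef, if_pos hGz, if_pos hGzp, hdF, hdG, mul_div_mul_left _ _ (hun z)]
    · have hGzp : G (z + p) ≠ 0 := by rw [huG]; exact mul_ne_zero (hun z) hGz
      simp only [hHdef, if_neg hGz, if_neg hGzp, huF, huG, mul_div_mul_left _ _ (hun z)]
  have per1 : Function.Periodic H 1 := key 1 h1
  have perτ : Function.Periodic H τ := key τ h2
  have hperiod : ∀ (m n : ℤ) (z : ℂ), H (z + ((m : ℂ) + (n : ℂ) * τ)) = H z := by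
    intro m n z
    have h1' := per1.int_mul m
    have h2' := perτ.int_mul n
    calc H (z + ((m : ℂ) + (n : ℂ) * τ))
        = H ((z + (n : ℂ) * τ) + (m : ℂ) * 1) := by ring_nf
      _ = H (z + (n : ℂ) * τ) := h1' _
      _ = H z := h2' _
  set Q : Set ℂ := (fun p : ℝ × ℝ => (p.1 : ℂ) + (p.2 : ℂ) * τ) ''
    (Set.Icc (0:ℝ) 1 ×ˢ Set.Icc (0:ℝ) 1) with hQdef
  have hQc : IsCompact Q := (isCompact_Icc.prod isCompact_Icc).image (by fun_prop)
  have hrange : Set.range H ⊆ H '' Q := by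
    rintro - ⟨z, rfl⟩
    have hτ0 : τ.im ≠ 0 := ne_of_gt hτ
    set y : ℝ := z.im / τ.im with hy
    set x : ℝ := z.re - y * τ.re with hx
    have hzeq : z = (x : ℂ) + (y : ℂ) * τ := by
      apply Complex.ext
      · simp [Complex.add_re, Complex.mul_re, hx]
      · simp [Complex.add_im, Complex.mul_im, hy]
        field_simp
    set z₀ : ℂ := ((Int.fract x : ℝ) : ℂ) + ((Int.fract y : ℝ) : ℂ) * τ with hz₀
    have hz₀Q : z₀ ∈ Q := by
      refine ⟨(Int.fract x, Int.fract y), ⟨⟨Int.fract_nonneg x, (Int.fract_lt_one x).le⟩,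
        ⟨Int.fract_nonneg y, (Int.fract_lt_one y).le⟩⟩, rfl⟩
    refine ⟨z₀, hz₀Q, ?_⟩
    have hsplit : z = z₀ + (((⌊x⌋ : ℤ) : ℂ) + ((⌊y⌋ : ℤ) : ℂ) * τ) := by
      rw [hzeq, hz₀]
      rw [Int.fract, Int.fract]
      push_cast
      ring
    rw [hsplit, hperiod]
  have hbd : Bornology.IsBounded (Set.range H) :=
    ((hQc.image hHdiff.continuous).isBounded).subset hrange
  refine ⟨H 0, fun z => ?_⟩
  have hconst : H z = H 0 := hHdiff.apply_eq_apply_of_bounded hbd z 0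
  by_cases hGz : G z = 0
  · rw [hz z hGz, hGz, mul_zero]
  · have hHz : H z = F z / G z := by simp [hHdef, hGz]
    rw [← hconst, hHz, div_mul_cancel₀ _ hGz]



/-- the multiplier of θ for translation by τ -/
def Mf (τ : ℂ) : ℂ → ℂ := fun z => -Complex.exp (-((Real.pi : ℂ) * Complex.I * τ)) *
  Complex.exp (-(2 * (Real.pi : ℂ) * Complex.I * z))

lemma Mf_diff (τ : ℂ) : Differentiable ℂ (Mf τ) := by
  unfold Mf; fun_prop

lemma Mf_ne (τ : ℂ) : ∀ z, Mf τ z ≠ 0 := by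
  intro z
  unfold Mf
  exact mul_ne_zero (neg_ne_zero.mpr (Complex.exp_ne_zero _)) (Complex.exp_ne_zero _)

variable {τ : ℂ} {θ : ℂ → ℂ}

lemma theta_τ (hθ : IsTheta τ θ) : ∀ z, θ (z + τ) = Mf τ z * θ z := hθ.2.2.2.2

lemma theta_step1 (hθ : IsTheta τ θ) :
    ∃ e : ℂ → ℂ, Differentiable ℂ e ∧ (∀ z, e z ≠ 0) ∧ ∀ z, θ (z + 1) = e z * θ z :=
  ⟨fun _ => -1, differentiable_const _, fun _ => by norm_num, fun z => by
    rw [hθ.2.2.2.1 z]; ring⟩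

lemma theta_stepτ (hθ : IsTheta τ θ) :
    ∃ e : ℂ → ℂ, Differentiable ℂ e ∧ (∀ z, e z ≠ 0) ∧ ∀ z, θ (z + τ) = e z * θ z :=
  ⟨Mf τ, Mf_diff τ, Mf_ne τ, theta_τ hθ⟩

lemma theta_translate (hθ : IsTheta τ θ) (m n : ℤ) :
    ∃ u : ℂ → ℂ, Differentiable ℂ u ∧ (∀ z, u z ≠ 0) ∧
      ∀ z, θ (z + ((m : ℂ) + (n : ℂ) * τ)) = u z * θ z :=
  translate_unit₂ τ θ (theta_step1 hθ) (theta_stepτ hθ) m n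

lemma theta_zero_zero (hθ : IsTheta τ θ) : θ 0 = 0 :=
  (hθ.2.2.1 0).mpr ⟨0, 0, by simp⟩

lemma deriv_theta_ne (hθ : IsTheta τ θ) : ∀ w ∈ LatSet τ, deriv θ w ≠ 0 := by
  rintro w ⟨m, n, rfl⟩
  obtain ⟨u, hu, hun, huq⟩ := theta_translate hθ m n
  have hfun : (fun z => θ (z + ((m : ℂ) + (n : ℂ) * τ))) = fun z => u z * θ z := funext huq
  have hcg := congrArg (fun f : ℂ → ℂ => deriv f 0) hfun
  rw [deriv_comp_add_const, zero_add] at hcg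
  rw [hcg, deriv_fun_mul (hu 0) (hθ.1 0), theta_zero_zero hθ, hθ.2.1, mul_zero, zero_add, mul_one]
  exact hun 0

/-- θ is odd -/
lemma theta_odd (hτ : 0 < τ.im) (hθ : IsTheta τ θ) : ∀ z, θ (-z) = -θ z := by
  have hM := theta_τ hθ
  have h1 := hθ.2.2.2.1
  obtain ⟨c, hc⟩ : ∃ c : ℂ, ∀ z, θ (-z) = c * θ z := by
    apply ratio_const hτ (fun z => θ (-z)) θ (hθ.1.comp differentiable_neg) hθ.1
    · intro w hw
      obtain ⟨m, n, rfl⟩ := (hθ.2.2.1 w).mp hw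
      exact (hθ.2.2.1 _).mpr ⟨-m, -n, by push_cast; ring⟩
    · intro w hw
      exact deriv_theta_ne hθ w ((hθ.2.2.1 w).mp hw)
    · refine ⟨fun _ => -1, differentiable_const _, fun _ => by norm_num, fun z => ?_, fun z => by
        rw [h1 z]; ring⟩
      have := h1 (-z - 1)
      rw [show -z - 1 + 1 = -z by ring] at this
      rw [show -(z+1) = -z - 1 by ring]
      rw [this]; ring
    · refine ⟨Mf τ, Mf_diff τ, Mf_ne τ, fun z => ?_, fun z => hM z⟩
      have hstep := hM (-z - τ)
      rw [show -z - τ + τ = -z by ring] at hstep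
      have hkey : Mf τ (-z - τ) * Mf τ z = 1 := by
        unfold Mf
        rw [show (-Complex.exp (-((Real.pi:ℂ) * Complex.I * τ)) *
            Complex.exp (-(2 * (Real.pi:ℂ) * Complex.I * (-z - τ)))) *
            (-Complex.exp (-((Real.pi:ℂ) * Complex.I * τ)) *
            Complex.exp (-(2 * (Real.pi:ℂ) * Complex.I * z)))
          = Complex.exp (-((Real.pi:ℂ) * Complex.I * τ)) *
            Complex.exp (-(2 * (Real.pi:ℂ) * Complex.I * (-z - τ))) *
            Complex.exp (-((Real.pi:ℂ) * Complex.I * τ)) *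
            Complex.exp (-(2 * (Real.pi:ℂ) * Complex.I * z)) from by ring]
        rw [← Complex.exp_add, ← Complex.exp_add, ← Complex.exp_add]
        rw [show -((Real.pi:ℂ) * Complex.I * τ) + -(2 * (Real.pi:ℂ) * Complex.I * (-z - τ)) +
            -((Real.pi:ℂ) * Complex.I * τ) + -(2 * (Real.pi:ℂ) * Complex.I * z) = 0 from by ring]
        exact Complex.exp_zero
      rw [show -(z + τ) = -z - τ by ring]
      have : Mf τ z * θ (-z) = Mf τ z * (Mf τ (-z - τ) * θ (-z - τ)) := by rw [← hstep]
      rw [this, ← mul_assoc, mul_comm (Mf τ z), hkey, one_mul]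
  have hderiv : -deriv θ 0 = c * deriv θ 0 := by
    have hfun : (fun z => θ (-z)) = fun z => c * θ z := funext hc
    have hcg := congrArg (fun f : ℂ → ℂ => deriv f 0) hfun
    rw [deriv_comp_neg, neg_zero] at hcg
    rw [hcg, deriv_const_mul c (hθ.1 0)]
  rw [hθ.2.1, mul_one] at hderiv
  intro z
  rw [hc z, ← hderiv, neg_one_mul]


def Nf (τ : ℂ) : ℂ → ℂ := fun z =>
  Complex.exp (-(2 * (Real.pi : ℂ) * Complex.I * τ) + -(4 * (Real.pi : ℂ) * Complex.I * z))

lemma Nf_diff (τ : ℂ) : Differentiable ℂ (Nf τ) := by unfold Nf; fun_prop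

lemma Nf_ne (τ : ℂ) : ∀ z, Nf τ z ≠ 0 := fun z => Complex.exp_ne_zero _

lemma pair_step (hθ : IsTheta τ θ) (a z : ℂ) :
    θ (z + τ + a) * θ (z + τ - a) = Nf τ z * (θ (z + a) * θ (z - a)) := by
  have hM := theta_τ hθ
  have e1 : θ (z + τ + a) = Mf τ (z + a) * θ (z + a) := by
    rw [show z + τ + a = (z + a) + τ by ring, hM]
  have e2 : θ (z + τ - a) = Mf τ (z - a) * θ (z - a) := by
    rw [show z + τ - a = (z - a) + τ by ring, hM]
  rw [e1, e2]
  have hkey : Mf τ (z + a) * Mf τ (z - a) = Nf τ z := by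
    unfold Mf Nf
    rw [show -Complex.exp (-((Real.pi:ℂ) * Complex.I * τ)) *
          Complex.exp (-(2 * (Real.pi:ℂ) * Complex.I * (z + a))) *
          (-Complex.exp (-((Real.pi:ℂ) * Complex.I * τ)) *
          Complex.exp (-(2 * (Real.pi:ℂ) * Complex.I * (z - a))))
        = Complex.exp (-((Real.pi:ℂ) * Complex.I * τ)) *
          Complex.exp (-(2 * (Real.pi:ℂ) * Complex.I * (z + a))) *
          Complex.exp (-((Real.pi:ℂ) * Complex.I * τ)) *
          Complex.exp (-(2 * (Real.pi:ℂ) * Complex.I * (z - a))) from by ring]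
    rw [← Complex.exp_add, ← Complex.exp_add, ← Complex.exp_add]
    exact congrArg Complex.exp (by ring)
  rw [← hkey]; ring

lemma three_term_gen (hτ : 0 < τ.im) (hθ : IsTheta τ θ) (h μ : ℂ)
    (hμ1 : θ (μ + μ) ≠ 0) (hμ2 : θ (μ + h) ≠ 0) (hμ3 : θ (μ - h) ≠ 0) :
    ∀ z, θ (z + h) * θ (z - h) * θ μ ^ 2 - θ z ^ 2 * (θ (μ + h) * θ (μ - h))
      = θ h ^ 2 * (θ (z + μ) * θ (z - μ)) := by
  have hodd := theta_odd hτ hθ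
  have hθd := hθ.1
  have hzs := hθ.2.2.1
  set F : ℂ → ℂ := fun z => θ (z + h) * θ (z - h) * θ μ ^ 2
    - θ z ^ 2 * (θ (μ + h) * θ (μ - h)) with hFdef
  set G : ℂ → ℂ := fun z => θ (z + μ) * θ (z - μ) with hGdef
  have hθc1 : ∀ a : ℂ, Differentiable ℂ (fun z : ℂ => θ (z + a)) :=
    fun a => hθd.comp (differentiable_id.add_const a)
  have hθc2 : ∀ a : ℂ, Differentiable ℂ (fun z : ℂ => θ (z - a)) :=
    fun a => hθd.comp (differentiable_id.sub_const a)
  have hFdiff : Differentiable ℂ F :=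
    (((hθc1 h).mul (hθc2 h)).mul_const _).sub ((hθd.pow 2).mul_const _)
  have hGdiff : Differentiable ℂ G := (hθc1 μ).mul (hθc2 μ)
  -- step structures for F and G
  have hF1 : ∀ z, F (z + 1) = 1 * F z := by
    intro z
    have q1 : θ (z + 1 + h) = -θ (z + h) := by
      rw [show z + 1 + h = (z + h) + 1 by ring, hθ.2.2.2.1]
    have q2 : θ (z + 1 - h) = -θ (z - h) := by
      rw [show z + 1 - h = (z - h) + 1 by ring, hθ.2.2.2.1]
    have q3 : θ (z + 1) = -θ z := hθ.2.2.2.1 z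
    simp only [hFdef]
    rw [q1, q2, q3]; ring
  have hG1 : ∀ z, G (z + 1) = 1 * G z := by
    intro z
    have q1 : θ (z + 1 + μ) = -θ (z + μ) := by
      rw [show z + 1 + μ = (z + μ) + 1 by ring, hθ.2.2.2.1]
    have q2 : θ (z + 1 - μ) = -θ (z - μ) := by
      rw [show z + 1 - μ = (z - μ) + 1 by ring, hθ.2.2.2.1]
    simp only [hGdef]
    rw [q1, q2]; ring
  have hFτ : ∀ z, F (z + τ) = Nf τ z * F z := by
    intro z
    have p1 := pair_step hθ h z
    have p0 := pair_step hθ 0 z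
    simp only [add_zero, sub_zero] at p0
    simp only [hFdef]
    linear_combination θ μ ^ 2 * p1 - (θ (μ + h) * θ (μ - h)) * p0
  have hGτ : ∀ z, G (z + τ) = Nf τ z * G z := by
    intro z
    have p1 := pair_step hθ μ z
    simp only [hGdef]
    linear_combination p1
  have hFsteps : ∃ u : ℂ → ℂ, Differentiable ℂ u ∧ (∀ z, u z ≠ 0) ∧
      ∀ z, F (z + 1) = u z * F z :=
    ⟨fun _ => 1, differentiable_const _, fun _ => one_ne_zero, hF1⟩
  have hFstepsτ : ∃ u : ℂ → ℂ, Differentiable ℂ u ∧ (∀ z, u z ≠ 0) ∧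
      ∀ z, F (z + τ) = u z * F z := ⟨Nf τ, Nf_diff τ, Nf_ne τ, hFτ⟩
  have hFμ : F μ = 0 := by simp only [hFdef]; ring
  have hFμ' : F (-μ) = 0 := by
    simp only [hFdef]
    have r1 : θ (-μ + h) = -θ (μ - h) := by
      rw [show -μ + h = -(μ - h) by ring, hodd]
    have r2 : θ (-μ - h) = -θ (μ + h) := by
      rw [show -μ - h = -(μ + h) by ring, hodd]
    rw [r1, r2, hodd]; ring
  have hz : ∀ w, G w = 0 → F w = 0 := by
    intro w hw
    simp only [hGdef] at hw
    rcases mul_eq_zero.mp hw with hw' | hw'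
    · obtain ⟨m, n, hmn⟩ := (hzs _).mp hw'
      obtain ⟨u, hu, hun, huq⟩ := translate_unit₂ τ F hFsteps hFstepsτ m n
      have : w = -μ + ((m : ℂ) + (n : ℂ) * τ) := by linear_combination hmn
      rw [this, huq, hFμ', mul_zero]
    · obtain ⟨m, n, hmn⟩ := (hzs _).mp hw'
      obtain ⟨u, hu, hun, huq⟩ := translate_unit₂ τ F hFsteps hFstepsτ m n
      have : w = μ + ((m : ℂ) + (n : ℂ) * τ) := by linear_combination hmn
      rw [this, huq, hFμ, mul_zero]
  have hz' : ∀ w, G w = 0 → deriv G w ≠ 0 := by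
    intro w hw
    have d1 : HasDerivAt (fun z : ℂ => θ (z + μ)) (deriv θ (w + μ)) w := by
      simpa [Function.comp_def] using (hθd (w + μ)).hasDerivAt.comp w ((hasDerivAt_id w).add_const μ)
    have d2 : HasDerivAt (fun z : ℂ => θ (z - μ)) (deriv θ (w - μ)) w := by
      simpa [Function.comp_def] using (hθd (w - μ)).hasDerivAt.comp w ((hasDerivAt_id w).sub_const μ)
    have dG : HasDerivAt G (deriv θ (w + μ) * θ (w - μ) + θ (w + μ) * deriv θ (w - μ)) w :=
      d1.mul d2
    rw [dG.deriv]
    have hsub : ¬ (θ (w + μ) = 0 ∧ θ (w - μ) = 0) := by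
      rintro ⟨ha, hb⟩
      obtain ⟨m1, n1, e1⟩ := (hzs _).mp ha
      obtain ⟨m2, n2, e2⟩ := (hzs _).mp hb
      apply hμ1
      refine (hzs _).mpr ⟨m1 - m2, n1 - n2, ?_⟩
      push_cast
      linear_combination e1 - e2
    simp only [hGdef] at hw
    rcases mul_eq_zero.mp hw with hw' | hw'
    · have hne : θ (w - μ) ≠ 0 := fun hb => hsub ⟨hw', hb⟩
      rw [hw', zero_mul, add_zero]
      exact mul_ne_zero (deriv_theta_ne hθ _ ((hzs _).mp hw')) hne
    · have hne : θ (w + μ) ≠ 0 := fun ha => hsub ⟨ha, hw'⟩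
      rw [hw', mul_zero, zero_add]
      exact mul_ne_zero hne (deriv_theta_ne hθ _ ((hzs _).mp hw'))
  obtain ⟨c, hc⟩ := ratio_const hτ F G hFdiff hGdiff hz hz'
    ⟨fun _ => 1, differentiable_const _, fun _ => one_ne_zero, hF1, hG1⟩
    ⟨Nf τ, Nf_diff τ, Nf_ne τ, hFτ, hGτ⟩
  have hGh : G h ≠ 0 := by
    simp only [hGdef]
    have r1 : θ (h + μ) = θ (μ + h) := by rw [add_comm]
    have r2 : θ (h - μ) = -θ (μ - h) := by
      rw [show h - μ = -(μ - h) by ring, hodd]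
    rw [r1, r2]
    exact mul_ne_zero hμ2 (neg_ne_zero.mpr hμ3)
  have hceq : c = θ h ^ 2 := by
    have hch := hc h
    have hFh : F h = θ h ^ 2 * G h := by
      simp only [hFdef, hGdef]
      have r0 : θ (h - h) = 0 := by
        rw [show h - h = (0 : ℂ) by ring]; exact theta_zero_zero hθ
      have r1 : θ (h + μ) = θ (μ + h) := by rw [add_comm]
      have r2 : θ (h - μ) = -θ (μ - h) := by
        rw [show h - μ = -(μ - h) by ring, hodd]
      rw [r0, r1, r2]; ring
    rw [hFh] at hch
    exact (mul_right_cancel₀ hGh hch.symm)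
  intro z
  have := hc z
  rw [hceq] at this
  simpa only [hFdef, hGdef] using this

lemma latset_countable (τ : ℂ) : (LatSet τ).Countable := by
  have : LatSet τ = Set.range (fun p : ℤ × ℤ => ((p.1 : ℂ) + (p.2 : ℂ) * τ)) := by
    ext w
    constructor
    · rintro ⟨m, n, rfl⟩; exact ⟨(m, n), rfl⟩
    · rintro ⟨⟨m, n⟩, rfl⟩; exact ⟨m, n, rfl⟩
  rw [this]
  exact Set.countable_range _

lemma three_term (hτ : 0 < τ.im) (hθ : IsTheta τ θ) :
    ∀ z μ h, θ (z + h) * θ (z - h) * θ μ ^ 2 - θ z ^ 2 * (θ (μ + h) * θ (μ - h))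
      = θ h ^ 2 * (θ (z + μ) * θ (z - μ)) := by
  intro z μ h
  have hθc := hθ.1.continuous
  have hzs := hθ.2.2.1
  set B : Set ℂ := {ν | θ (ν + ν) = 0 ∨ θ (ν + h) = 0 ∨ θ (ν - h) = 0} with hBdef
  have hBc : B.Countable := by
    have hsub : B ⊆ (fun w : ℂ => w / 2) '' LatSet τ ∪
        ((fun w : ℂ => w - h) '' LatSet τ ∪ (fun w : ℂ => w + h) '' LatSet τ) := by
      rintro ν (hν | hν | hν)
      · exact Or.inl ⟨ν + ν, (hzs _).mp hν, by ring⟩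
      · exact Or.inr (Or.inl ⟨ν + h, (hzs _).mp hν, by ring⟩)
      · exact Or.inr (Or.inr ⟨ν - h, (hzs _).mp hν, by ring⟩)
    exact Set.Countable.mono hsub
      (((latset_countable τ).image _).union
        (((latset_countable τ).image _).union ((latset_countable τ).image _)))
  have hdense : Dense Bᶜ := hBc.dense_compl ℂ
  have hcont : Continuous fun ν : ℂ => θ (z + h) * θ (z - h) * θ ν ^ 2
      - θ z ^ 2 * (θ (ν + h) * θ (ν - h)) - θ h ^ 2 * (θ (z + ν) * θ (z - ν)) := by
    fun_prop
  have heq : (fun ν : ℂ => θ (z + h) * θ (z - h) * θ ν ^ 2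
      - θ z ^ 2 * (θ (ν + h) * θ (ν - h)) - θ h ^ 2 * (θ (z + ν) * θ (z - ν)))
      = fun _ => (0 : ℂ) := by
    apply Continuous.ext_on hdense hcont continuous_const
    intro ν hν
    simp only [hBdef, Set.mem_compl_iff, Set.mem_setOf_eq] at hν
    push_neg at hν
    obtain ⟨hν1, hν2, hν3⟩ := hν
    have := three_term_gen hτ hθ h ν hν1 hν2 hν3 z
    linear_combination this
  have := congrFun heq μ
  linear_combination this

end GaussAux

/-- Gauss (lower × diagonal × upper) decomposition of the elliptic R-matrix `R⁻`
with `γ = −ħ`. -/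
theorem gauss_decomposition_Rminus
    (τ : ℂ) (hτ : 0 < τ.im) (θ : ℂ → ℂ) (hθ : IsTheta τ θ)
    (z μ h : ℂ) (h1 : θ z ≠ 0) (h2 : θ (z - h) ≠ 0) (h3 : θ μ ≠ 0) :
    ((1 : Matrix (Fin 2 × Fin 2) (Fin 2 × Fin 2) ℂ)
        + (θ h * θ (μ - z) / (θ (-z) * θ μ)) • (Em 1 0 ⊗ₖ Em 0 1)) *
      (Em 0 0 ⊗ₖ Em 0 0 + Em 1 1 ⊗ₖ Em 1 1
        + (θ (-z) / θ (-z + h)) • (Em 0 0 ⊗ₖ Em 1 1)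
        + (θ (-z - h) / θ (-z)) • (Em 1 1 ⊗ₖ Em 0 0)) *
      ((1 : Matrix (Fin 2 × Fin 2) (Fin 2 × Fin 2) ℂ)
        - (θ h * θ (z + μ) / (θ z * θ μ)) • (Em 0 1 ⊗ₖ Em 1 0))
    = Rminus θ (-h) z μ := by
  have hodd := GaussAux.theta_odd hτ hθ
  have tt := GaussAux.three_term hτ hθ z μ h
  rw [Rminus]
  rw [show z + -h = z - h by ring, show μ - -h = μ + h by ring,
    show μ + -h = μ - h by ring, hodd h,
    show (-z + h : ℂ) = -(z - h) by ring, show (-z - h : ℂ) = -(z + h) by ring,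
    show (μ - z : ℂ) = -(z - μ) by ring, hodd (z - h), hodd (z + h), hodd (z - μ), hodd z]
  ext ⟨i, k⟩ ⟨j, l⟩
  fin_cases i <;> fin_cases k <;> fin_cases j <;> fin_cases l <;>
    simp [Matrix.mul_apply, Matrix.add_apply, Matrix.sub_apply, Matrix.smul_apply,
      Matrix.one_apply, Matrix.kroneckerMap_apply, Em, Matrix.single,
      Fintype.sum_prod_type, Fin.sum_univ_two, smul_eq_mul]
  · rw [show -(θ z / θ (z - h) * (θ h * θ (z + μ) / (θ z * θ μ)))
        = -(θ z * (θ (z + μ) * θ h) / (θ z * (θ (z - h) * θ μ))) by ring,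
      mul_div_mul_left _ _ h1, neg_div]
  · rw [show θ h * θ (z - μ) / (θ z * θ μ) * (θ z / θ (z - h))
        = θ z * (θ (z - μ) * θ h) / (θ z * (θ (z - h) * θ μ)) by ring,
      mul_div_mul_left _ _ h1, neg_div, neg_neg]
  · have hden : θ z * θ μ * θ (z - h) * (θ z * θ μ) ≠ 0 :=
      mul_ne_zero (mul_ne_zero (mul_ne_zero h1 h3) h2) (mul_ne_zero h1 h3)
    rw [show -(θ h * θ (z - μ) / (θ z * θ μ) * (θ z / θ (z - h)) * (θ h * θ (z + μ) / (θ z * θ μ)))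
        = -(θ h ^ 2 * (θ (z + μ) * θ (z - μ)) * θ z) / (θ z * θ μ * θ (z - h) * (θ z * θ μ)) by ring,
      div_add_div _ _ hden h1,
      div_eq_div_iff (mul_ne_zero hden h1) (mul_ne_zero (pow_ne_zero 2 h3) h2)]
    linear_combination θ z ^ 2 * θ μ ^ 2 * θ (z - h) * tt
end
end

section
/- Let z, λ, γ ∈ ℂ with θ(z+γ) ≠ 0, θ(z+τ+γ) ≠ 0 and θ(λ) ≠ 0. Then R⁻(z+1,λ) = R⁻(z,λ), and R⁻ satisfies the quasi-periodicity in z: for all a′, b′, a, b ∈ {1,−1}, the matrix entry of R⁻(z+τ,λ) sending v_a⊗v_b to v_{a′}⊗v_{b′} equals e^{iπγ} · e^{−iπa′(λ+γb′)} · e^{iπaλ} times the corresponding matrix entry of R⁻(z,λ); equivalently, R⁻(z+τ,λ) = e^{iπγ} · t⁽¹⁾_{λ+γh⁽²⁾} · R⁻(z,λ) · (t⁽¹⁾_λ)⁻¹, where t⁽¹⁾_{λ+γh⁽²⁾}(v_a⊗v_b) = e^{−iπa(λ+γb)} v_a⊗v_b and t⁽¹⁾_λ(v_a⊗v_b) =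 e^{−iπaλ} v_a⊗v_b. -/
noncomputable section
open Complex Matrix Kronecker

/-- Periodicity `R⁻(z+1,λ) = R⁻(z,λ)` and quasi-periodicity of `R⁻` in `z` under `z ↦ z+τ`:
entrywise, and in the matrix form `R⁻(z+τ,λ) = e^{iπγ} t⁽¹⁾_{λ+γh⁽²⁾} R⁻(z,λ) (t⁽¹⁾_λ)⁻¹`. -/
theorem Rminus_periodicity
    (τ : ℂ) (hτ : 0 < τ.im) (θ : ℂ → ℂ) (hθ : IsTheta τ θ)
    (z lam γ : ℂ) (h1 : θ (z + γ) ≠ 0) (h2 : θ (z + τ + γ) ≠ 0) (h3 : θ lam ≠ 0) :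
    Rminus θ γ (z + 1) lam = Rminus θ γ z lam ∧
    (∀ a' b' a b : Fin 2,
      Rminus θ γ (z + τ) lam (a', b') (a, b)
        = Complex.exp ((Real.pi : ℂ) * Complex.I * γ) *
            Complex.exp (-((Real.pi : ℂ) * Complex.I) * sgn a' * (lam + γ * sgn b')) *
            Complex.exp ((Real.pi : ℂ) * Complex.I * sgn a * lam) *
            Rminus θ γ z lam (a', b') (a, b)) ∧
    Rminus θ γ (z + τ) lam
      = Complex.exp ((Real.pi : ℂ) * Complex.I * γ) •
          ((Matrix.diagonal (fun p : Fin 2 × Fin 2 =>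
              Complex.exp (-((Real.pi : ℂ) * Complex.I) * sgn p.1 * (lam + γ * sgn p.2)))) *
            Rminus θ γ z lam *
            (Matrix.diagonal (fun p : Fin 2 × Fin 2 =>
              Complex.exp (-((Real.pi : ℂ) * Complex.I) * sgn p.1 * lam)))⁻¹) := by
  obtain ⟨-, -, -, hp1, hpτ⟩ := hθ
  -- z ↦ z+1 coefficient identities
  have B1 : θ (z+1) / θ (z+1+γ) = θ z / θ (z+γ) := by
    rw [hp1 z, show z+1+γ = (z+γ)+1 by ring, hp1, neg_div_neg_eq]
  have B2 : θ (lam-γ) * θ (lam+γ) * θ (z+1) / (θ lam ^ 2 * θ (z+1+γ))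
      = θ (lam-γ) * θ (lam+γ) * θ z / (θ lam ^ 2 * θ (z+γ)) := by
    rw [hp1 z, show z+1+γ = (z+γ)+1 by ring, hp1, mul_neg, mul_neg, neg_div_neg_eq]
  have B3 : θ (z+1+lam) * θ γ / (θ (z+1+γ) * θ lam)
      = θ (z+lam) * θ γ / (θ (z+γ) * θ lam) := by
    rw [show z+1+lam = (z+lam)+1 by ring, show z+1+γ = (z+γ)+1 by ring, hp1, hp1,
      neg_mul, neg_mul, neg_div_neg_eq]
  have B4 : θ (z+1-lam) * θ γ / (θ (z+1+γ) * θ lam)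
      = θ (z-lam) * θ γ / (θ (z+γ) * θ lam) := by
    rw [show z+1-lam = (z-lam)+1 by ring, show z+1+γ = (z+γ)+1 by ring, hp1, hp1,
      neg_mul, neg_mul, neg_div_neg_eq]
  have part1 : Rminus θ γ (z + 1) lam = Rminus θ γ z lam := by
    simp only [Rminus]; rw [B1, B2, B3, B4]
  -- exp shifting identities
  have hEz : Complex.exp (-(2*(Real.pi:ℂ)*Complex.I*z))
      = Complex.exp (2*(Real.pi:ℂ)*Complex.I*γ)
        * Complex.exp (-(2*(Real.pi:ℂ)*Complex.I*(z+γ))) := by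
    rw [← Complex.exp_add]; congr 1; ring
  have hEl : Complex.exp (-(2*(Real.pi:ℂ)*Complex.I*(z+lam)))
      = Complex.exp (2*(Real.pi:ℂ)*Complex.I*(γ-lam))
        * Complex.exp (-(2*(Real.pi:ℂ)*Complex.I*(z+γ))) := by
    rw [← Complex.exp_add]; congr 1; ring
  have hEm : Complex.exp (-(2*(Real.pi:ℂ)*Complex.I*(z-lam)))
      = Complex.exp (2*(Real.pi:ℂ)*Complex.I*(γ+lam))
        * Complex.exp (-(2*(Real.pi:ℂ)*Complex.I*(z+γ))) := by
    rw [← Complex.exp_add]; congr 1; ring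
  -- z ↦ z+τ coefficient identities
  have C1 : θ (z+τ) / θ (z+τ+γ)
      = Complex.exp (2*(Real.pi:ℂ)*Complex.I*γ) * (θ z / θ (z+γ)) := by
    rw [show z+τ+γ = (z+γ)+τ by ring, hpτ, hpτ, hEz]
    field_simp
  have C2 : θ (lam-γ) * θ (lam+γ) * θ (z+τ) / (θ lam ^ 2 * θ (z+τ+γ))
      = Complex.exp (2*(Real.pi:ℂ)*Complex.I*γ)
        * (θ (lam-γ) * θ (lam+γ) * θ z / (θ lam ^ 2 * θ (z+γ))) := by
    rw [show z+τ+γ = (z+γ)+τ by ring, hpτ, hpτ, hEz]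
    field_simp
  have C3 : θ (z+τ+lam) * θ γ / (θ (z+τ+γ) * θ lam)
      = Complex.exp (2*(Real.pi:ℂ)*Complex.I*(γ-lam))
        * (θ (z+lam) * θ γ / (θ (z+γ) * θ lam)) := by
    rw [show z+τ+lam = (z+lam)+τ by ring, show z+τ+γ = (z+γ)+τ by ring, hpτ, hpτ, hEl]
    field_simp
  have C4 : θ (z+τ-lam) * θ γ / (θ (z+τ+γ) * θ lam)
      = Complex.exp (2*(Real.pi:ℂ)*Complex.I*(γ+lam))
        * (θ (z-lam) * θ γ / (θ (z+γ) * θ lam)) := by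
    rw [show z+τ-lam = (z-lam)+τ by ring, show z+τ+γ = (z+γ)+τ by ring, hpτ, hpτ, hEm]
    field_simp
  have part2 : ∀ a' b' a b : Fin 2,
      Rminus θ γ (z + τ) lam (a', b') (a, b)
        = Complex.exp ((Real.pi : ℂ) * Complex.I * γ) *
            Complex.exp (-((Real.pi : ℂ) * Complex.I) * sgn a' * (lam + γ * sgn b')) *
            Complex.exp ((Real.pi : ℂ) * Complex.I * sgn a * lam) *
            Rminus θ γ z lam (a', b') (a, b) := by
    intro a' b' a b
    fin_cases a' <;> fin_cases b' <;> fin_cases a <;> fin_cases b <;>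
      simp only [Rminus, Em, sgn, Matrix.add_apply, Matrix.sub_apply, Matrix.smul_apply,
        Matrix.kroneckerMap_apply, smul_eq_mul] <;>
      simp [Matrix.single]
    · symm; rw [← Complex.exp_zero, ← Complex.exp_add, ← Complex.exp_add]; congr 1; ring
    · rw [C1, ← Complex.exp_add, ← Complex.exp_add]; congr 2; ring
    · rw [C3, ← Complex.exp_add, ← Complex.exp_add]; congr 2; ring
    · rw [C4, ← Complex.exp_add, ← Complex.exp_add]; congr 2; ring
    · rw [C2, ← Complex.exp_add, ← Complex.exp_add]; congr 2; ring
    · symm; rw [← Complex.exp_zero, ← Complex.exp_add, ← Complex.exp_add]; congr 1; ring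
  refine ⟨part1, part2, ?_⟩
  have hinv : (Matrix.diagonal (fun p : Fin 2 × Fin 2 =>
        Complex.exp (-((Real.pi : ℂ) * Complex.I) * sgn p.1 * lam)))⁻¹
      = Matrix.diagonal (fun p : Fin 2 × Fin 2 =>
        Complex.exp ((Real.pi : ℂ) * Complex.I * sgn p.1 * lam)) := by
    apply Matrix.inv_eq_right_inv
    rw [Matrix.diagonal_mul_diagonal, ← Matrix.diagonal_one]
    refine congrArg Matrix.diagonal (funext fun p => ?_)
    rw [← Complex.exp_add, ← Complex.exp_zero]; congr 1; ring
  rw [hinv]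
  ext ⟨a', b'⟩ ⟨a, b⟩
  simp only [Matrix.smul_apply, smul_eq_mul, Matrix.mul_diagonal, Matrix.diagonal_mul]
  rw [part2 a' b' a b]; ring
end
end

section
/- Let p ≥ 1 be an integer and ħ ∈ ℂ. Define F(ζ) = θ(ζ) · (∏_{k=1}^{p−1} θ(ζ−2kħ))² · θ(ζ−2pħ) / (∏_{k=0}^{p−1} θ(ζ−(2k+1)ħ))² (with the empty product equal to 1). Then for every ζ ∈ ℂ at which all theta factors appearing in denominators are nonzero, F(ζ)·F(ζ−ħ) = θ(ζ)·θ(ζ−(2p+1)ħ) / (θ(ζ−ħ)·θ(ζ−2pħ)); that is, F solves the multiplicative functional equation defining the series f_K of the paper in the case K = −2p. -/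
noncomputable section
open Complex Matrix Kronecker

/-- The explicit solution `f_K` of the paper for `K = −2p`:
`F(ζ) = θ(ζ)(∏_{k=1}^{p−1}θ(ζ−2kħ))² θ(ζ−2pħ) / (∏_{k=0}^{p−1}θ(ζ−(2k+1)ħ))²`. -/
def fK (θ : ℂ → ℂ) (h : ℂ) (p : ℕ) (ζ : ℂ) : ℂ :=
  θ ζ * (∏ k ∈ Finset.Icc 1 (p - 1), θ (ζ - 2 * (k : ℂ) * h)) ^ 2 * θ (ζ - 2 * (p : ℂ) * h) /
    (∏ k ∈ Finset.range p, θ (ζ - (2 * (k : ℂ) + 1) * h)) ^ 2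

/-- `F` solves the multiplicative functional equation
`F(ζ)F(ζ−ħ) = θ(ζ)θ(ζ−(2p+1)ħ)/(θ(ζ−ħ)θ(ζ−2pħ))` defining the series `f_K` for `K = −2p`. -/
theorem fK_functional_equation
    (τ : ℂ) (hτ : 0 < τ.im) (θ : ℂ → ℂ) (hθ : IsTheta τ θ)
    (p : ℕ) (hp : 1 ≤ p) (h : ℂ) (ζ : ℂ)
    (hden1 : ∀ k ∈ Finset.range p, θ (ζ - (2 * (k : ℂ) + 1) * h) ≠ 0)
    (hden2 : ∀ k ∈ Finset.Icc 1 p, θ (ζ - 2 * (k : ℂ) * h) ≠ 0) :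
    fK θ h p ζ * fK θ h p (ζ - h)
      = θ ζ * θ (ζ - (2 * (p : ℂ) + 1) * h) / (θ (ζ - h) * θ (ζ - 2 * (p : ℂ) * h)) := by
  obtain ⟨q, rfl⟩ : ∃ q, p = q + 1 := ⟨p - 1, (Nat.succ_pred_eq_of_pos hp).symm⟩
  have ha : θ (ζ - h) ≠ 0 := by
    have := hden1 0 (Finset.mem_range.mpr (Nat.succ_pos q))
    simpa using this
  have hb : θ (ζ - 2 * ((q : ℂ) + 1) * h) ≠ 0 := by
    have := hden2 (q + 1) (Finset.mem_Icc.mpr ⟨Nat.succ_le_succ (Nat.zero_le q), le_rfl⟩)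
    push_cast at this
    exact this
  have hP1 : (∏ j ∈ Finset.range q, θ (ζ - 2 * ((j : ℂ) + 1) * h)) ≠ 0 := by
    refine Finset.prod_ne_zero_iff.mpr fun j hj => ?_
    have := hden2 (j + 1) (Finset.mem_Icc.mpr
      ⟨Nat.succ_le_succ (Nat.zero_le j), Nat.succ_le_succ (Finset.mem_range.mp hj).le⟩)
    push_cast at this
    exact this
  have hP2 : (∏ j ∈ Finset.range q, θ (ζ - (2 * ((j : ℂ) + 1) + 1) * h)) ≠ 0 := by
    refine Finset.prod_ne_zero_iff.mpr fun j hj => ?_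
    have := hden1 (j + 1) (Finset.mem_range.mpr (Nat.succ_lt_succ (Finset.mem_range.mp hj)))
    push_cast at this
    exact this
  -- rewrite all four products
  have e1 : (∏ k ∈ Finset.Icc 1 ((q + 1) - 1), θ (ζ - 2 * (k : ℂ) * h))
      = ∏ j ∈ Finset.range q, θ (ζ - 2 * ((j : ℂ) + 1) * h) := by
    rw [Nat.add_sub_cancel, ← Finset.Ico_add_one_right_eq_Icc, Finset.prod_Ico_eq_prod_range]
    refine Finset.prod_congr (by simp) fun j _ => ?_
    push_cast; ring_nf
  have e2 : (∏ k ∈ Finset.range (q + 1), θ (ζ - (2 * (k : ℂ) + 1) * h))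
      = θ (ζ - h) * ∏ j ∈ Finset.range q, θ (ζ - (2 * ((j : ℂ) + 1) + 1) * h) := by
    rw [Finset.prod_range_succ']
    rw [mul_comm]
    congr 1
    · norm_num
    · refine Finset.prod_congr rfl fun j _ => ?_
      push_cast; ring_nf
  have e3 : (∏ k ∈ Finset.Icc 1 ((q + 1) - 1), θ (ζ - h - 2 * (k : ℂ) * h))
      = ∏ j ∈ Finset.range q, θ (ζ - (2 * ((j : ℂ) + 1) + 1) * h) := by
    rw [Nat.add_sub_cancel, ← Finset.Ico_add_one_right_eq_Icc, Finset.prod_Ico_eq_prod_range]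
    refine Finset.prod_congr (by simp) fun j _ => ?_
    push_cast; ring_nf
  have e4 : (∏ k ∈ Finset.range (q + 1), θ (ζ - h - (2 * (k : ℂ) + 1) * h))
      = (∏ j ∈ Finset.range q, θ (ζ - 2 * ((j : ℂ) + 1) * h)) * θ (ζ - 2 * ((q : ℂ) + 1) * h) := by
    rw [Finset.prod_range_succ]
    congr 1
    · refine Finset.prod_congr rfl fun j _ => ?_
      push_cast; ring_nf
    · push_cast; ring_nf
  have e5 : ζ - h - 2 * (((q : ℕ) + 1 : ℕ) : ℂ) * h = ζ - (2 * ((q : ℂ) + 1) + 1) * h := by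
    push_cast; ring
  have e6 : ζ - 2 * (((q : ℕ) + 1 : ℕ) : ℂ) * h = ζ - 2 * ((q : ℂ) + 1) * h := by push_cast; ring
  have e7 : ζ - (2 * (((q : ℕ) + 1 : ℕ) : ℂ) + 1) * h = ζ - (2 * ((q : ℂ) + 1) + 1) * h := by
    push_cast; ring
  unfold fK
  rw [e1, e2, e3, e4, e5, e6, e7]
  set P1 := ∏ j ∈ Finset.range q, θ (ζ - 2 * ((j : ℂ) + 1) * h) with hP1def
  set P2 := ∏ j ∈ Finset.range q, θ (ζ - (2 * ((j : ℂ) + 1) + 1) * h) with hP2def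
  field_simp
end
end

section
/- Let λ ∈ ℂ with λ ∉ L. A function f that is holomorphic on ℂ∖L and extends to a meromorphic function on ℂ with poles contained in L satisfies f(z+1) = f(z) and f(z+τ) = e^{−2iπλ} f(z) for all z ∈ ℂ∖L if and only if f is a finite ℂ-linear combination of the functions g_i(z) = (d/dz)^i (θ(λ+z)/θ(z)), i ≥ 0. Moreover the functions g_i, i ≥ 0, are linearly independent over ℂ. -/
noncomputable section
open Complex Matrix Kronecker

namespace LLaux

open Filter Topology Set Function

variable {τ : ℂ}

lemma lat_zero : (0:ℂ) ∈ LatSet τ := ⟨0, 0, by simp⟩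

lemma lat_intcast (m : ℤ) : ((m:ℂ)) ∈ LatSet τ := ⟨m, 0, by simp⟩

lemma lat_one : (1:ℂ) ∈ LatSet τ := by simpa using lat_intcast (τ := τ) 1

lemma lat_tau : τ ∈ LatSet τ := ⟨0, 1, by simp⟩

lemma lat_add {a b : ℂ} (ha : a ∈ LatSet τ) (hb : b ∈ LatSet τ) : a + b ∈ LatSet τ := by
  obtain ⟨m, n, rfl⟩ := ha; obtain ⟨m', n', rfl⟩ := hb
  exact ⟨m + m', n + n', by push_cast; ring⟩

lemma lat_neg {a : ℂ} (ha : a ∈ LatSet τ) : -a ∈ LatSet τ := by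
  obtain ⟨m, n, rfl⟩ := ha; exact ⟨-m, -n, by push_cast; ring⟩

lemma lat_sub {a b : ℂ} (ha : a ∈ LatSet τ) (hb : b ∈ LatSet τ) : a - b ∈ LatSet τ := by
  simpa [sub_eq_add_neg] using lat_add ha (lat_neg hb)

lemma notlat_add {a b : ℂ} (ha : a ∉ LatSet τ) (hb : b ∈ LatSet τ) : a + b ∉ LatSet τ := by
  intro h; exact ha (by simpa using lat_sub h hb)

lemma notlat_sub {a b : ℂ} (ha : a ∉ LatSet τ) (hb : b ∈ LatSet τ) : a - b ∉ LatSet τ := by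
  simpa [sub_eq_add_neg] using notlat_add ha (lat_neg hb)

lemma lat_norm_lower (hτ : 0 < τ.im) {z : ℂ} (hz : z ∈ LatSet τ) (h0 : z ≠ 0) :
    min 1 τ.im ≤ ‖z‖ := by
  obtain ⟨m, n, rfl⟩ := hz
  rcases eq_or_ne n 0 with rfl | hn
  · simp only [Int.cast_zero, zero_mul, add_zero] at h0 ⊢
    have hm : m ≠ 0 := by exact_mod_cast h0
    calc min 1 τ.im ≤ 1 := min_le_left _ _
      _ ≤ |(m:ℝ)| := by exact_mod_cast Int.one_le_abs hm
      _ = ‖((m:ℂ))‖ := by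
          rw [Complex.norm_intCast]
  · have him : ((m:ℂ) + (n:ℂ) * τ).im = (n:ℝ) * τ.im := by
      simp [Complex.add_im, Complex.mul_im]
    calc min 1 τ.im ≤ τ.im := min_le_right _ _
      _ ≤ |(n:ℝ)| * τ.im := by
          nlinarith [Int.one_le_abs hn, (by exact_mod_cast (abs_nonneg (n:ℝ)) : (0:ℝ) ≤ |(n:ℝ)|),
            (by exact_mod_cast Int.one_le_abs hn : (1:ℝ) ≤ |(n:ℝ)|)]
      _ = |((m:ℂ) + (n:ℂ) * τ).im| := by rw [him, abs_mul, abs_of_pos hτ]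
      _ ≤ ‖((m:ℂ) + (n:ℂ) * τ)‖ := Complex.abs_im_le_norm _

lemma lat_eq_of_close (hτ : 0 < τ.im) {a b : ℂ} (ha : a ∈ LatSet τ) (hb : b ∈ LatSet τ)
    (h : dist a b < min 1 τ.im) : a = b := by
  by_contra hne
  have := lat_norm_lower hτ (lat_sub ha hb) (sub_ne_zero.mpr hne)
  rw [Complex.dist_eq] at h
  linarith

lemma isOpen_notlat (hτ : 0 < τ.im) : IsOpen (LatSet τ)ᶜ := by
  rw [Metric.isOpen_iff]
  intro z hz
  by_contra hcon
  push_neg at hcon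
  have hmin : 0 < min 1 τ.im := lt_min one_pos hτ
  obtain ⟨w₁, hw₁ball, hw₁⟩ : ∃ w, w ∈ Metric.ball z (min 1 τ.im / 2) ∧ w ∈ LatSet τ := by
    obtain ⟨w, hw1, hw2⟩ := Set.not_subset.mp (hcon (min 1 τ.im / 2) (by positivity))
    exact ⟨w, hw1, not_not.mp hw2⟩
  have key : ∀ ε > 0, dist w₁ z < ε := by
    intro ε hε
    obtain ⟨w₂, hw₂ball, hw₂⟩ : ∃ w, w ∈ Metric.ball z (min ε (min 1 τ.im / 2)) ∧ w ∈ LatSet τ := by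
      obtain ⟨w, hw1, hw2⟩ := Set.not_subset.mp
        (hcon (min ε (min 1 τ.im / 2)) (lt_min hε (by positivity)))
      exact ⟨w, hw1, not_not.mp hw2⟩
    rw [Metric.mem_ball] at hw₁ball hw₂ball
    have h12 : dist w₂ w₁ < min 1 τ.im := by
      have := dist_triangle w₂ z w₁
      have h1 : dist w₂ z < min 1 τ.im / 2 := lt_of_lt_of_le hw₂ball (min_le_right _ _)
      have h2 : dist z w₁ < min 1 τ.im / 2 := by rwa [dist_comm]
      linarith
    have : w₂ = w₁ := lat_eq_of_close hτ hw₂ hw₁ h12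
    subst this
    exact lt_of_lt_of_le hw₂ball (min_le_left _ _)
  have : dist w₁ z = 0 := by
    by_contra hd
    have hp : 0 < dist w₁ z := lt_of_le_of_ne dist_nonneg (Ne.symm hd)
    exact absurd (key _ hp) (lt_irrefl _)
  rw [dist_eq_zero] at this
  exact hz (this ▸ hw₁)

lemma notlat_eventually (hτ : 0 < τ.im) {w : ℂ} : ∀ᶠ z in 𝓝[≠] w, z - w ∉ LatSet τ ∧ z - w ≠ 0 := by
  have hmin : 0 < min 1 τ.im := lt_min one_pos hτ
  filter_upwards [self_mem_nhdsWithin,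
    eventually_nhdsWithin_of_eventually_nhds (Metric.ball_mem_nhds w hmin)] with z hz hball
  refine ⟨fun hL => ?_, sub_ne_zero.mpr hz⟩
  have := lat_norm_lower hτ hL (sub_ne_zero.mpr hz)
  rw [Complex.dist_eq] at hball
  linarith

lemma notlat_ball (hτ : 0 < τ.im) {w z : ℂ} (hw : w ∈ LatSet τ) (hz : z ∈ Metric.ball w (min 1 τ.im))
    (hne : z ≠ w) : z ∉ LatSet τ := by
  intro hzL
  have := lat_norm_lower hτ (lat_sub hzL hw) (sub_ne_zero.mpr hne)
  rw [Metric.mem_ball, Complex.dist_eq] at hz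
  linarith

lemma lat_eventually_notlat (hτ : 0 < τ.im) {w : ℂ} (hw : w ∈ LatSet τ) : ∀ᶠ z in 𝓝[≠] w, z ∉ LatSet τ := by
  filter_upwards [notlat_eventually hτ] with z hz hL
  exact hz.1 (by simpa using lat_sub hL hw)

lemma dense_notlat (hτ : 0 < τ.im) : Dense (LatSet τ)ᶜ := by
  rw [Metric.dense_iff]
  intro x r hr
  by_cases hx : x ∈ LatSet τ
  · have hmin : 0 < min 1 τ.im := lt_min one_pos hτ
    set t : ℝ := min r (min 1 τ.im) / 2 with ht
    have htpos : 0 < t := by positivity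
    have habs : ‖((t:ℝ):ℂ)‖ = t := by
      rw [Complex.norm_real, Real.norm_eq_abs, abs_of_pos htpos]
    have htr : t < r := by
      have h1 : min r (min 1 τ.im) ≤ r := min_le_left _ _
      simp only [ht]; linarith
    have htm : t < min 1 τ.im := by
      have h1 : min r (min 1 τ.im) ≤ min 1 τ.im := min_le_right _ _
      simp only [ht]; linarith
    refine ⟨x + (t:ℂ), ?_, ?_⟩
    · rw [Metric.mem_ball, Complex.dist_eq]
      simpa [abs_of_pos htpos] using htr
    · intro hL
      have htlat : ((t:ℝ):ℂ) ∈ LatSet τ := by simpa using lat_sub hL hx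
      have hge := lat_norm_lower hτ htlat (by exact_mod_cast htpos.ne')
      rw [habs] at hge
      linarith
  · exact ⟨x, Metric.mem_ball_self hr, hx⟩


/-- multiplier -/
def QQ (lam : ℂ) : ℂ := Complex.exp (-(2 * (Real.pi : ℂ) * Complex.I * lam))

/-- the basic function θ(λ+z)/θ(z) -/
def gfun (θ : ℂ → ℂ) (lam : ℂ) : ℂ → ℂ := fun w => θ (lam + w) / θ w

lemma QQ_ne_zero (lam : ℂ) : QQ lam ≠ 0 := Complex.exp_ne_zero _


variable {θ : ℂ → ℂ} {lam : ℂ}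

lemma theta_ne (hθ : IsTheta τ θ) {z : ℂ} (hz : z ∉ LatSet τ) : θ z ≠ 0 :=
  fun h => hz ((hθ.2.2.1 z).mp h)

lemma theta_zero (hθ : IsTheta τ θ) : θ 0 = 0 := (hθ.2.2.1 0).mpr lat_zero

lemma g_per1 (hθ : IsTheta τ θ) (z : ℂ) : gfun θ lam (z + 1) = gfun θ lam z := by
  unfold gfun
  rw [show lam + (z + 1) = (lam + z) + 1 by ring, hθ.2.2.2.1, hθ.2.2.2.1, neg_div_neg_eq]

lemma g_pertau (hθ : IsTheta τ θ) (z : ℂ) :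
    gfun θ lam (z + τ) = QQ lam * gfun θ lam z := by
  unfold gfun
  rw [show lam + (z + τ) = (lam + z) + τ by ring, hθ.2.2.2.2, hθ.2.2.2.2]
  set A : ℂ := -Complex.exp (-((Real.pi : ℂ) * Complex.I * τ)) with hA
  set e₂ : ℂ := Complex.exp (-(2 * (Real.pi : ℂ) * Complex.I * z)) with he₂
  have hAe : A * e₂ ≠ 0 :=
    mul_ne_zero (neg_ne_zero.mpr (Complex.exp_ne_zero _)) (Complex.exp_ne_zero _)
  have he₁ : Complex.exp (-(2 * (Real.pi : ℂ) * Complex.I * (lam + z))) = QQ lam * e₂ := by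
    rw [QQ, he₂, ← Complex.exp_add]; congr 1; ring
  rw [he₁]
  have h1 : A * (QQ lam * e₂) * θ (lam + z) = (A * e₂) * (QQ lam * θ (lam + z)) := by ring
  have h2 : A * e₂ * θ z = (A * e₂) * θ z := by ring
  rw [h1, h2, mul_div_mul_left _ _ hAe, mul_div_assoc]

lemma g_diffOn (hθ : IsTheta τ θ) : DifferentiableOn ℂ (gfun θ lam) (LatSet τ)ᶜ := by
  apply DifferentiableOn.div
  · exact (hθ.1.comp ((differentiable_id).const_add lam)).differentiableOn
  · exact hθ.1.differentiableOn
  · exact fun z hz => theta_ne hθ hz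

lemma g_anal (hτ : 0 < τ.im) (hθ : IsTheta τ θ) :
    AnalyticOnNhd ℂ (gfun θ lam) (LatSet τ)ᶜ :=
  (g_diffOn hθ).analyticOnNhd (isOpen_notlat hτ)

lemma D_anal (hτ : 0 < τ.im) (hθ : IsTheta τ θ) (i : ℕ) :
    AnalyticOnNhd ℂ (iteratedDeriv i (gfun θ lam)) (LatSet τ)ᶜ := by
  induction i with
  | zero => simpa [iteratedDeriv_zero] using g_anal hτ hθ
  | succ i ih =>
    rw [iteratedDeriv_succ]
    exact ih.deriv_of_isOpen (isOpen_notlat hτ)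

lemma D_diffOn (hτ : 0 < τ.im) (hθ : IsTheta τ θ) (i : ℕ) :
    DifferentiableOn ℂ (iteratedDeriv i (gfun θ lam)) (LatSet τ)ᶜ :=
  (D_anal hτ hθ i).differentiableOn

lemma D_per1 (hτ : 0 < τ.im) (hθ : IsTheta τ θ) (i : ℕ) :
    ∀ z ∉ LatSet τ, iteratedDeriv i (gfun θ lam) (z + 1) = iteratedDeriv i (gfun θ lam) z := by
  induction i with
  | zero => intro z _; simpa [iteratedDeriv_zero] using g_per1 (lam := lam) hθ z
  | succ i ih =>
    intro z hz
    rw [iteratedDeriv_succ, ← deriv_comp_add_const _ 1 z]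
    apply Filter.EventuallyEq.deriv_eq
    filter_upwards [(isOpen_notlat hτ).mem_nhds hz] with w hw
    exact ih w hw

lemma D_pertau (hτ : 0 < τ.im) (hθ : IsTheta τ θ) (i : ℕ) :
    ∀ z ∉ LatSet τ,
      iteratedDeriv i (gfun θ lam) (z + τ) = QQ lam * iteratedDeriv i (gfun θ lam) z := by
  induction i with
  | zero => intro z _; simpa [iteratedDeriv_zero] using g_pertau (lam := lam) hθ z
  | succ i ih =>
    intro z hz
    rw [iteratedDeriv_succ, ← deriv_comp_add_const _ τ z]
    have h1 : (fun w => iteratedDeriv i (gfun θ lam) (w + τ)) =ᶠ[𝓝 z]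
        (fun w => QQ lam * iteratedDeriv i (gfun θ lam) w) := by
      filter_upwards [(isOpen_notlat hτ).mem_nhds hz] with w hw
      exact ih w hw
    rw [h1.deriv_eq, deriv_const_mul_field]

lemma D_rep (hθ : IsTheta τ θ) (hlam : lam ∉ LatSet τ) (i : ℕ) :
    ∃ P : ℂ → ℂ, AnalyticAt ℂ P 0 ∧ P 0 = (-1 : ℂ) ^ i * (Nat.factorial i : ℂ) * θ lam ∧
      ∀ᶠ z in 𝓝[≠] (0:ℂ), iteratedDeriv i (gfun θ lam) z = P z / z ^ (i + 1) := by
  have θanal : ∀ x : ℂ, AnalyticAt ℂ θ x := fun x => hθ.1.analyticAt x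
  have hu : AnalyticAt ℂ (dslope θ 0) 0 := by
    obtain ⟨p, hp⟩ := θanal 0
    exact hp.has_fpower_series_dslope_fslope.analyticAt
  have hu0 : dslope θ 0 0 = 1 := by rw [dslope_same]; exact hθ.2.1
  have θz : ∀ z : ℂ, z ≠ 0 → θ z = z * dslope θ 0 z := by
    intro z hz
    rw [dslope_of_ne _ hz]
    simp only [slope, vsub_eq_sub, theta_zero hθ, sub_zero, smul_eq_mul]
    field_simp
  set φ : ℂ → ℂ := fun z => θ (lam + z) / dslope θ 0 z with hφdef
  have hφ : AnalyticAt ℂ φ 0 := by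
    apply AnalyticAt.div
    · exact (hθ.1.comp ((differentiable_id).const_add lam)).analyticAt 0
    · exact hu
    · rw [hu0]; exact one_ne_zero
  have hφ0 : φ 0 = θ lam := by
    show θ (lam + 0) / dslope θ 0 0 = θ lam
    rw [add_zero, hu0, div_one]
  have hev : ∀ᶠ z in 𝓝[≠] (0:ℂ), gfun θ lam z = φ z / z ^ 1 := by
    have hne : ∀ᶠ z in 𝓝 (0:ℂ), dslope θ 0 z ≠ 0 :=
      hu.continuousAt.eventually_ne (by rw [hu0]; exact one_ne_zero)
    filter_upwards [self_mem_nhdsWithin, eventually_nhdsWithin_of_eventually_nhds hne]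
      with z hz hne'
    have hz0 : z ≠ 0 := hz
    rw [pow_one]
    show θ (lam + z) / θ z = φ z / z
    rw [θz z hz0, hφdef]
    rw [show z * dslope θ 0 z = dslope θ 0 z * z from mul_comm _ _, ← div_div]
  induction i with
  | zero => exact ⟨φ, hφ, by simpa using hφ0, by simpa using hev⟩
  | succ i ih =>
    obtain ⟨P, hP, hP0, hPev⟩ := ih
    have hdP : AnalyticAt ℂ (deriv P) 0 := by
      obtain ⟨s, hs, hsa⟩ := hP.exists_mem_nhds_analyticOnNhd
      exact hsa.deriv 0 (mem_of_mem_nhds hs)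
    refine ⟨fun z => z * deriv P z - ((i:ℂ) + 1) * P z,
      (analyticAt_id.mul hdP).sub (analyticAt_const.mul hP), ?_, ?_⟩
    · show (0:ℂ) * deriv P 0 - ((i:ℂ) + 1) * P 0 = _
      rw [hP0]; push_cast [Nat.factorial_succ]; ring
    · have hP' : ∀ᶠ w in 𝓝 (0:ℂ), AnalyticAt ℂ P w := hP.eventually_analyticAt
      rw [eventually_nhdsWithin_iff] at hPev ⊢
      obtain ⟨t, ht, htop, ht0⟩ := eventually_nhds_iff.mp (hPev.and hP')
      refine eventually_nhds_iff.mpr ⟨t, ?_, htop, ht0⟩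
      intro z hzt hz0'
      have hz0 : z ≠ 0 := by simpa using hz0'
      rw [iteratedDeriv_succ]
      have heq : iteratedDeriv i (gfun θ lam) =ᶠ[𝓝 z] fun w => P w / w ^ (i + 1) := by
        refine eventually_nhds_iff.mpr ⟨t ∩ {(0:ℂ)}ᶜ, ?_, htop.inter isOpen_compl_singleton,
          ⟨hzt, hz0⟩⟩
        intro w hw
        exact (ht w hw.1).1 (by simpa using hw.2)
      rw [heq.deriv_eq]
      have hPz : DifferentiableAt ℂ P z := (ht z hzt).2.differentiableAt
      rw [deriv_fun_div hPz (differentiableAt_pow _) (pow_ne_zero _ hz0), deriv_pow_field, Nat.add_sub_cancel]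
      field_simp
      push_cast
      ring



lemma tendsto_pow_mul_anal {gg : ℂ → ℂ} (hgg : AnalyticAt ℂ gg 0) (j : ℕ) :
    Tendsto (fun z : ℂ => z ^ j * gg z) (𝓝[≠] (0:ℂ)) (𝓝 ((0:ℂ) ^ j * gg 0)) := by
  have h1 : Tendsto (fun z : ℂ => z ^ j * gg z) (𝓝 (0:ℂ)) (𝓝 ((0:ℂ) ^ j * gg 0)) :=
    ((continuous_pow j).tendsto 0).mul (hgg.continuousAt)
  exact h1.mono_left nhdsWithin_le_nhds

/-- From meromorphy plus a vanishing limit at one order, get a limit at the next lower order. -/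
lemma order_step {F : ℂ → ℂ} (hF : MeromorphicAt F 0) (p : ℕ)
    (h0 : Tendsto (fun z => z ^ (p + 1) * F z) (𝓝[≠] (0:ℂ)) (𝓝 0)) :
    ∃ b, Tendsto (fun z => z ^ p * F z) (𝓝[≠] (0:ℂ)) (𝓝 b) := by
  rcases eq_or_ne (meromorphicOrderAt F 0) ⊤ with htop | hne
  · refine ⟨0, ?_⟩
    have hev := meromorphicOrderAt_eq_top_iff.mp htop
    have : (fun z : ℂ => z ^ p * F z) =ᶠ[𝓝[≠] (0:ℂ)] (fun _ => 0) := by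
      filter_upwards [hev] with z hz; rw [hz, mul_zero]
    exact Tendsto.congr' this.symm tendsto_const_nhds
  · obtain ⟨m, hm⟩ := WithTop.ne_top_iff_exists.mp hne
    obtain ⟨gg, hgg, hgg0, hev⟩ := (meromorphicOrderAt_eq_int_iff hF).mp hm.symm
    have hev' : ∀ᶠ z in 𝓝[≠] (0:ℂ), F z = z ^ m * gg z := by
      filter_upwards [hev] with z hz; simpa [smul_eq_mul] using hz
    by_cases hs : 0 ≤ m + p
    · -- limit exists
      refine ⟨(0:ℂ) ^ (m + p).toNat * gg 0, ?_⟩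
      have heq : (fun z : ℂ => z ^ p * F z) =ᶠ[𝓝[≠] (0:ℂ)]
          (fun z => z ^ (m + p).toNat * gg z) := by
        filter_upwards [hev', self_mem_nhdsWithin] with z hz hz0
        have hz0' : (z:ℂ) ≠ 0 := hz0
        rw [hz]
        have : (z:ℂ) ^ p * (z ^ m * gg z) = z ^ ((m + p).toNat) * gg z := by
          rw [← mul_assoc]
          congr 1
          rw [← zpow_natCast z p, ← zpow_natCast z (m+p).toNat, ← zpow_add₀ hz0',
            Int.toNat_of_nonneg hs]
          ring_nf
        rw [this]
      exact Tendsto.congr' heq.symm (tendsto_pow_mul_anal hgg _)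
    · -- contradiction with h0
      exfalso
      push_neg at hs
      set n : ℕ := (-m).toNat with hn
      have hnm : (n : ℤ) = -m := by rw [hn, Int.toNat_of_nonneg (by omega)]
      have hnp : p + 1 ≤ n := by omega
      set j : ℕ := n - (p + 1) with hjdef
      have hA : (fun z : ℂ => (z ^ (p+1) * F z) * z ^ j) =ᶠ[𝓝[≠] (0:ℂ)] gg := by
        filter_upwards [hev', self_mem_nhdsWithin] with z hz hz0
        have hz0' : (z:ℂ) ≠ 0 := hz0
        have hzm : (z:ℂ) ^ m = (z ^ n)⁻¹ := by
          rw [← zpow_natCast z n, ← _root_.zpow_neg, hnm, neg_neg]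
        rw [hz, hzm]
        have hpow : (z:ℂ) ^ (p+1) * z ^ j = z ^ n := by
          rw [← pow_add]; congr 1; omega
        field_simp
        calc z ^ (p+1) * gg z * z ^ j = (z ^ (p+1) * z ^ j) * gg z := by ring
          _ = z ^ n * gg z := by rw [hpow]
          _ = z ^ n * gg z := by ring
      have hT1 : Tendsto (fun z : ℂ => (z ^ (p+1) * F z) * z ^ j) (𝓝[≠] (0:ℂ)) (𝓝 0) := by
        have h2 : Tendsto (fun z : ℂ => z ^ j) (𝓝[≠] (0:ℂ)) (𝓝 ((0:ℂ) ^ j)) :=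
          ((continuous_pow j).tendsto 0).mono_left nhdsWithin_le_nhds
        simpa using h0.mul h2
      have hT2 : Tendsto (fun z : ℂ => (z ^ (p+1) * F z) * z ^ j) (𝓝[≠] (0:ℂ)) (𝓝 (gg 0)) := by
        refine Tendsto.congr' hA.symm ?_
        exact hgg.continuousAt.continuousWithinAt.tendsto.mono_left (by rfl)
      exact hgg0 (tendsto_nhds_unique hT2 hT1)

lemma init_tendsto {F : ℂ → ℂ} (hF : MeromorphicAt F 0) :
    ∃ (p : ℕ) (a : ℂ), Tendsto (fun z => z ^ p * F z) (𝓝[≠] (0:ℂ)) (𝓝 a) := by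
  rcases eq_or_ne (meromorphicOrderAt F 0) ⊤ with htop | hne
  · refine ⟨0, 0, ?_⟩
    have hev := meromorphicOrderAt_eq_top_iff.mp htop
    have : (fun z : ℂ => z ^ 0 * F z) =ᶠ[𝓝[≠] (0:ℂ)] (fun _ => 0) := by
      filter_upwards [hev] with z hz; rw [hz, mul_zero]
    exact Tendsto.congr' this.symm tendsto_const_nhds
  · obtain ⟨m, hm⟩ := WithTop.ne_top_iff_exists.mp hne
    obtain ⟨gg, hgg, hgg0, hev⟩ := (meromorphicOrderAt_eq_int_iff hF).mp hm.symm
    have hev' : ∀ᶠ z in 𝓝[≠] (0:ℂ), F z = z ^ m * gg z := by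
      filter_upwards [hev] with z hz; simpa [smul_eq_mul] using hz
    refine ⟨(-m).toNat, (0:ℂ) ^ (m + (-m).toNat).toNat * gg 0, ?_⟩
    have hs : (0:ℤ) ≤ m + (-m).toNat := by
      rcases le_or_gt 0 m with h | h
      · omega
      · rw [Int.toNat_of_nonneg (by omega)]; omega
    have heq : (fun z : ℂ => z ^ (-m).toNat * F z) =ᶠ[𝓝[≠] (0:ℂ)]
        (fun z => z ^ ((m + (-m).toNat).toNat) * gg z) := by
      filter_upwards [hev', self_mem_nhdsWithin] with z hz hz0
      have hz0' : (z:ℂ) ≠ 0 := hz0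
      rw [hz, ← mul_assoc]
      congr 1
      rw [← zpow_natCast z (-m).toNat, ← zpow_natCast z (m + (-m).toNat).toNat,
        ← zpow_add₀ hz0', Int.toNat_of_nonneg hs]
      ring_nf
    exact Tendsto.congr' heq.symm (tendsto_pow_mul_anal hgg _)


/-- An entire function with `h(z+1) = h z` and `h(z+τ) = Q h z`, `λ ∉ L`, vanishes. -/
theorem entire_vanish (hτ : 0 < τ.im) (hlam : lam ∉ LatSet τ)
    (h : ℂ → ℂ) (hd : Differentiable ℂ h)
    (hp1 : ∀ z, h (z + 1) = h z) (hpτ : ∀ z, h (z + τ) = QQ lam * h z) :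
    ∀ z, h z = 0 := by
  classical
  have hper : Function.Periodic h (((1:ℝ)):ℂ) := by
    intro z; simpa using hp1 z
  set G : ℂ → ℂ := Function.Periodic.cuspFunction 1 h with hGdef
  have hG_eq : ∀ z, G (Function.Periodic.qParam 1 z) = h z := fun z =>
    Function.Periodic.eq_cuspFunction one_ne_zero hper z
  have hq_ne : ∀ z, Function.Periodic.qParam 1 z ≠ 0 := fun z => Complex.exp_ne_zero _
  have hGdiff : ∀ w : ℂ, w ≠ 0 → DifferentiableAt ℂ G w := by
    intro w hw
    rw [← Function.Periodic.qParam_right_inv one_ne_zero hw]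
    exact Function.Periodic.differentiableAt_cuspFunction one_ne_zero hper (hd _)
  set r : ℂ := Complex.exp (2 * (Real.pi : ℂ) * Complex.I * τ) with hrdef
  have hr0 : r ≠ 0 := Complex.exp_ne_zero _
  have hre : (2 * (Real.pi:ℂ) * Complex.I * τ).re = -(2 * Real.pi * τ.im) := by
    simp [Complex.mul_re, Complex.mul_im, Complex.I_re, Complex.I_im]
  have habsr : ‖r‖ = Real.exp (-(2 * Real.pi * τ.im)) := by
    rw [hrdef, Complex.norm_exp, hre]
  have habsr_pos : 0 < ‖r‖ := norm_pos_iff.mpr hr0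
  have habsr_lt : ‖r‖ < 1 := by
    rw [habsr, Real.exp_lt_one_iff]
    have := Real.pi_pos
    nlinarith
  have hqp : ∀ z : ℂ, Function.Periodic.qParam 1 z = Complex.exp (2 * (Real.pi:ℂ) * Complex.I * z) := by
    intro z
    simp [Function.Periodic.qParam]
  have hqmul : ∀ z : ℂ, Function.Periodic.qParam 1 (z + τ) = r * Function.Periodic.qParam 1 z := by
    intro z
    rw [hqp, hqp, hrdef, ← Complex.exp_add]
    congr 1; ring
  have hGscale : ∀ w : ℂ, w ≠ 0 → G (r * w) = QQ lam * G w := by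
    intro w hw
    have hw' : Function.Periodic.qParam 1 (Function.Periodic.invQParam 1 w) = w :=
      Function.Periodic.qParam_right_inv one_ne_zero hw
    calc G (r * w) = G (Function.Periodic.qParam 1 (Function.Periodic.invQParam 1 w + τ)) := by
          rw [hqmul, hw']
      _ = h (Function.Periodic.invQParam 1 w + τ) := hG_eq _
      _ = QQ lam * h (Function.Periodic.invQParam 1 w) := hpτ _
      _ = QQ lam * G w := by rw [← hG_eq, hw']
  -- bound on the fundamental annulus
  set A : Set ℂ := {w : ℂ | ‖r‖ ≤ ‖w‖ ∧ ‖w‖ ≤ 1} with hAdef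
  have hAcl : IsClosed A := by
    have : A = (fun w : ℂ => ‖w‖) ⁻¹' (Set.Icc ‖r‖ 1) := rfl
    rw [this]
    exact (isClosed_Icc).preimage continuous_norm
  have hAbd : Bornology.IsBounded A := by
    apply Bornology.IsBounded.subset (Metric.isBounded_closedBall (x := (0:ℂ)) (r := 1))
    intro w hw
    simpa [Complex.dist_eq] using hw.2
  have hAcomp : IsCompact A := Metric.isCompact_of_isClosed_isBounded hAcl hAbd
  have hGcont : ContinuousOn G A := by
    intro w hw
    have hw0 : w ≠ 0 := by
      intro h0
      rw [h0] at hw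
      simp only [hAdef, Set.mem_setOf_eq, norm_zero] at hw
      linarith [hw.1]
    exact (hGdiff w hw0).continuousAt.continuousWithinAt
  obtain ⟨M, hM⟩ := hAcomp.exists_bound_of_continuousOn hGcont
  have hM0 : 0 ≤ M := by
    have h1A : (1:ℂ) ∈ A := by
      constructor <;> simp [habsr_lt.le]
    exact le_trans (norm_nonneg _) (hM 1 h1A)
  -- level bounds
  have lvl : ∀ k : ℕ, ∀ w : ℂ, ‖r‖ ^ (k+1) ≤ ‖w‖ →
      ‖w‖ ≤ ‖r‖ ^ k → ‖G w‖ ≤ ‖QQ lam‖ ^ k * M := by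
    intro k
    induction k with
    | zero =>
      intro w h1 h2
      simpa using hM w ⟨by simpa using h1, by simpa using h2⟩
    | succ k ih =>
      intro w h1 h2
      have hw0 : w ≠ 0 := by
        intro h0; rw [h0] at h1; simp only [norm_zero] at h1
        exact absurd h1 (not_le.mpr (by positivity))
      set w' : ℂ := w / r with hw'def
      have hw'0 : w' ≠ 0 := div_ne_zero hw0 hr0
      have habsw' : ‖w'‖ = ‖w‖ / ‖r‖ := by
        rw [hw'def, norm_div]
      have hb1 : ‖r‖ ^ (k+1) ≤ ‖w'‖ := by
        rw [habsw', le_div_iff₀ habsr_pos, ← pow_succ]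
        exact h1
      have hb2 : ‖w'‖ ≤ ‖r‖ ^ k := by
        rw [habsw', div_le_iff₀ habsr_pos, ← pow_succ]
        exact h2
      have : G w = QQ lam * G w' := by
        rw [← hGscale w' hw'0, hw'def, mul_div_cancel₀ _ hr0]
      rw [this, norm_mul]
      calc ‖QQ lam‖ * ‖G w'‖ ≤ ‖QQ lam‖ * (‖QQ lam‖ ^ k * M) := by
            apply mul_le_mul_of_nonneg_left (ih w' hb1 hb2) (norm_nonneg _)
        _ = ‖QQ lam‖ ^ (k+1) * M := by
            ring
  -- covering by levels
  have cover : ∀ w : ℂ, w ≠ 0 → ‖w‖ ≤ 1 →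
      ∃ k : ℕ, ‖r‖ ^ (k+1) ≤ ‖w‖ ∧ ‖w‖ ≤ ‖r‖ ^ k := by
    intro w hw0 hw1
    have habsw : 0 < ‖w‖ := norm_pos_iff.mpr hw0
    have hex : ∃ k : ℕ, ‖r‖ ^ k < ‖w‖ := by
      have ht := tendsto_pow_atTop_nhds_zero_of_lt_one habsr_pos.le habsr_lt
      exact (ht.eventually (eventually_lt_nhds habsw)).exists
    set K := Nat.find hex with hK
    have hKspec : ‖r‖ ^ K < ‖w‖ := Nat.find_spec hex
    have hKne : K ≠ 0 := by
      intro h0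
      rw [hK] at h0
      have := Nat.find_eq_zero hex |>.mp h0
      simp only [pow_zero] at this
      linarith
    refine ⟨K - 1, ?_, ?_⟩
    · have hKK : K - 1 + 1 = K := by omega
      rw [hKK]
      exact hKspec.le
    · have := Nat.find_min hex (m := K - 1) (by omega)
      exact le_of_not_gt this
  -- choose N
  obtain ⟨N, hN⟩ : ∃ N : ℕ, ‖QQ lam‖ * ‖r‖ ^ N < 1 := by
    have ht : Tendsto (fun n : ℕ => ‖QQ lam‖ * ‖r‖ ^ n) atTop (𝓝 0) := by
      simpa using (tendsto_pow_atTop_nhds_zero_of_lt_one habsr_pos.le habsr_lt).const_mul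
        (‖QQ lam‖)
    exact (ht.eventually (eventually_lt_nhds one_pos)).exists
  -- global bound
  have bound_all : ∀ w : ℂ, w ≠ 0 → ‖w‖ ≤ 1 → ‖w ^ N * G w‖ ≤ M := by
    intro w hw0 hw1
    obtain ⟨k, hk1, hk2⟩ := cover w hw0 hw1
    have h1 : ‖w ^ N * G w‖ = ‖w‖ ^ N * ‖G w‖ := by
      rw [norm_mul, norm_pow]
    rw [h1]
    have h2 : ‖w‖ ^ N ≤ (‖r‖ ^ k) ^ N :=
      pow_le_pow_left₀ (norm_nonneg _) hk2 N
    have h3 : ‖G w‖ ≤ ‖QQ lam‖ ^ k * M := lvl k w hk1 hk2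
    calc ‖w‖ ^ N * ‖G w‖ ≤ (‖r‖ ^ k) ^ N * (‖QQ lam‖ ^ k * M) :=
          mul_le_mul h2 h3 (norm_nonneg _) (by positivity)
      _ = (‖QQ lam‖ * ‖r‖ ^ N) ^ k * M := by
          rw [mul_pow, ← pow_mul, ← pow_mul, Nat.mul_comm N k]
          ring
      _ ≤ 1 * M := by
          apply mul_le_mul_of_nonneg_right _ hM0
          exact pow_le_one₀ (by positivity) hN.le
      _ = M := one_mul M
  -- the function w^(N+2) * G w tends to 0 and extends
  have hball1 : ∀ᶠ w : ℂ in 𝓝[≠] (0:ℂ), ‖w‖ ≤ 1 ∧ w ≠ 0 := by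
    refine Filter.Eventually.and ?_ self_mem_nhdsWithin
    apply eventually_nhdsWithin_of_eventually_nhds
    have hmem : Metric.closedBall (0:ℂ) 1 ∈ 𝓝 (0:ℂ) := Metric.closedBall_mem_nhds _ one_pos
    filter_upwards [hmem] with w hw
    simpa [Complex.dist_eq] using hw
  have hT : Tendsto (fun w : ℂ => w ^ (N + 2) * G w) (𝓝[≠] (0:ℂ)) (𝓝 0) := by
    have hbnd : ∀ᶠ w : ℂ in 𝓝[≠] (0:ℂ), ‖w ^ (N + 2) * G w‖ ≤ ‖w‖ ^ 2 * M := by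
      filter_upwards [hball1] with w hw
      have hsplit : w ^ (N+2) * G w = w ^ 2 * (w ^ N * G w) := by ring
      rw [hsplit, norm_mul]
      have hn2 : ‖w ^ 2‖ = ‖w‖ ^ 2 := by rw [norm_pow]
      rw [hn2]
      exact mul_le_mul_of_nonneg_left (bound_all w hw.2 hw.1) (by positivity)
    have hg0 : Tendsto (fun w : ℂ => ‖w‖ ^ 2 * M) (𝓝[≠] (0:ℂ)) (𝓝 0) := by
      have h5 := (((continuous_norm : Continuous fun w : ℂ => ‖w‖).pow 2).tendsto 0).mul_const M
      simpa using h5.mono_left nhdsWithin_le_nhds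
    exact squeeze_zero_norm' hbnd hg0
  have ho0 : (fun z : ℂ => z ^ (N + 2) * G z) =o[𝓝[≠] (0:ℂ)] fun z : ℂ => (z - 0)⁻¹ := by
    have h1 : (fun z : ℂ => z ^ (N + 2) * G z) =o[𝓝[≠] (0:ℂ)] (fun _ => (1:ℂ)) :=
      (Asymptotics.isLittleO_one_iff ℂ).mpr hT
    refine h1.trans_isBigO (Asymptotics.IsBigO.of_bound 1 ?_)
    filter_upwards [hball1] with w hw
    rw [norm_one, one_mul, sub_zero, norm_inv]
    have := inv_anti₀ (norm_pos_iff.mpr hw.2) hw.1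
    simpa using this
  have hdiffp : DifferentiableOn ℂ (fun w : ℂ => w ^ (N + 2) * G w) (Set.univ \ {0}) := by
    intro w hw
    exact ((differentiableAt_pow (N+2)).mul (hGdiff w hw.2)).differentiableWithinAt
  have Hup := Complex.differentiableOn_update_limUnder_of_isLittleO
    (Filter.univ_mem) hdiffp (by simpa using ho0)
  have hlim : limUnder (𝓝[≠] (0:ℂ)) (fun w : ℂ => w ^ (N + 2) * G w) = 0 := hT.limUnder_eq
  rw [hlim] at Hup
  set G₃ : ℂ → ℂ := Function.update (fun w : ℂ => w ^ (N + 2) * G w) 0 0 with hG₃def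
  have hG₃diff : Differentiable ℂ G₃ := by
    rw [← differentiableOn_univ]
    exact Hup
  have hG₃0 : G₃ 0 = 0 := Function.update_self _ _ _
  have hG₃ne : ∀ w : ℂ, w ≠ 0 → G₃ w = w ^ (N + 2) * G w := fun w hw =>
    Function.update_of_ne hw _ _
  set cc : ℂ := r ^ (N + 2) * QQ lam with hccdef
  have hscale : ∀ w : ℂ, G₃ (r * w) = cc * G₃ w := by
    intro w
    rcases eq_or_ne w 0 with rfl | hw0
    · rw [mul_zero, hG₃0, mul_zero]
    · have hrw : r * w ≠ 0 := mul_ne_zero hr0 hw0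
      rw [hG₃ne _ hrw, hG₃ne _ hw0, hGscale w hw0, hccdef]
      ring
  -- iterated derivatives at 0 vanish
  have hDzero : ∀ n : ℕ, iteratedDeriv n G₃ 0 = 0 := by
    intro n
    have e1 : iteratedDeriv n (fun w => G₃ (r * w)) 0 = r ^ n * iteratedDeriv n G₃ 0 := by
      rw [iteratedDeriv_comp_const_mul hG₃diff.contDiff r]
      simp
    have e2 : iteratedDeriv n (fun w => G₃ (r * w)) 0 = cc * iteratedDeriv n G₃ 0 := by
      have hfun : (fun w => G₃ (r * w)) = fun w => cc * G₃ w := funext hscale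
      rw [hfun, ← iteratedDerivWithin_univ, ← iteratedDerivWithin_univ]
      exact iteratedDerivWithin_const_mul (Set.mem_univ 0) uniqueDiffOn_univ cc
        (hG₃diff.contDiff.contDiffWithinAt)
    have hcne : cc ≠ r ^ n := by
      intro hceq
      apply hlam
      rw [hccdef, hrdef] at hceq
      rw [← Complex.exp_nat_mul, ← Complex.exp_nat_mul] at hceq
      simp only [QQ] at hceq
      rw [← Complex.exp_add, Complex.exp_eq_exp_iff_exp_sub_eq_one,
        Complex.exp_eq_one_iff] at hceq
      obtain ⟨k, hk⟩ := hceq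
      have h2πI : (2 * (Real.pi:ℂ) * Complex.I) ≠ 0 := by
        simp [Real.pi_ne_zero, Complex.I_ne_zero]
      have hk' : (2 * (Real.pi:ℂ) * Complex.I) * (((N:ℂ) + 2 - (n:ℂ)) * τ - lam - (k:ℂ)) = 0 := by
        push_cast at hk
        linear_combination hk
      have h3 : ((N:ℂ) + 2 - (n:ℂ)) * τ - lam - (k:ℂ) = 0 :=
        (mul_eq_zero.mp hk').resolve_left h2πI
      refine ⟨-k, (N:ℤ) + 2 - (n:ℤ), ?_⟩
      push_cast
      linear_combination -h3
    have := e1.symm.trans e2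
    by_contra hD
    exact hcne (mul_right_cancel₀ hD this).symm
  -- conclude G₃ ≡ 0, then h ≡ 0
  have hG₃zero : ∀ z : ℂ, G₃ z = 0 := by
    intro z
    have := Complex.taylorSeries_eq_of_entire' (c := 0) (z := z) hG₃diff
    simp only [hDzero, mul_zero, zero_mul, tsum_zero] at this
    exact this.symm
  have hGzero : ∀ w : ℂ, w ≠ 0 → G w = 0 := by
    intro w hw
    have := hG₃zero w
    rw [hG₃ne w hw] at this
    exact (mul_eq_zero.mp this).resolve_left (pow_ne_zero _ hw)
  intro z
  rw [← hG_eq z]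
  exact hGzero _ (hq_ne z)


-- ===== further lemmas =====

lemma lat_int_tau (n : ℤ) : ((n:ℂ) * τ) ∈ LatSet τ := ⟨0, n, by simp⟩

lemma D_tendsto (hθ : IsTheta τ θ) (hlam : lam ∉ LatSet τ) (i : ℕ) :
    Tendsto (fun z => z ^ (i+1) * iteratedDeriv i (gfun θ lam) z) (𝓝[≠] (0:ℂ))
      (𝓝 ((-1:ℂ) ^ i * (Nat.factorial i : ℂ) * θ lam)) := by
  obtain ⟨P, hP, hP0, hPev⟩ := D_rep hθ hlam i
  have hPt : Tendsto P (𝓝[≠] (0:ℂ)) (𝓝 (P 0)) :=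
    hP.continuousAt.tendsto.mono_left nhdsWithin_le_nhds
  rw [← hP0]
  refine Tendsto.congr' ?_ hPt
  filter_upwards [hPev, self_mem_nhdsWithin] with z hz hz0
  have hz0' : (z:ℂ) ≠ 0 := hz0
  rw [hz, mul_div_cancel₀ _ (pow_ne_zero _ hz0')]

lemma lead_ne (hθ : IsTheta τ θ) (hlam : lam ∉ LatSet τ) (i : ℕ) :
    ((-1:ℂ) ^ i * (Nat.factorial i : ℂ) * θ lam) ≠ 0 := by
  refine mul_ne_zero (mul_ne_zero ?_ ?_) (theta_ne hθ hlam)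
  · exact pow_ne_zero _ (by norm_num)
  · exact_mod_cast (Nat.factorial_pos i).ne'

lemma D_mero (hθ : IsTheta τ θ) (hlam : lam ∉ LatSet τ) (i : ℕ) :
    MeromorphicAt (iteratedDeriv i (gfun θ lam)) 0 := by
  obtain ⟨P, hP, _, hPev⟩ := D_rep hθ hlam i
  have h1 : MeromorphicAt (fun z => P z / z ^ (i+1)) 0 :=
    (hP.meromorphicAt).div (((differentiable_pow (i+1)).analyticAt 0).meromorphicAt)
  exact h1.congr (Filter.EventuallyEq.symm hPev)

section Shifts

variable {f : ℂ → ℂ}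

lemma shift_int (hp1 : ∀ z ∉ LatSet τ, f (z + 1) = f z) :
    ∀ (m : ℤ), ∀ z ∉ LatSet τ, f (z + (m:ℂ)) = f z := by
  intro m
  induction m using Int.induction_on with
  | zero => intro z _; simp
  | succ i ih =>
    intro z hz
    have hcast : (((i:ℤ) + 1 : ℤ) : ℂ) = ((i:ℤ):ℂ) + 1 := by push_cast; ring
    rw [hcast, show z + (((i:ℤ):ℂ) + 1) = (z + ((i:ℤ):ℂ)) + 1 from by ring,
      hp1 _ (notlat_add hz (lat_intcast i)), ih z hz]
  | pred i ih =>
    intro z hz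
    have hwL : z + (-(i:ℂ) - 1) ∉ LatSet τ := by
      have hcast : -(i:ℂ) - 1 = ((-(i:ℤ) - 1 : ℤ) : ℂ) := by push_cast; ring
      rw [hcast]; exact notlat_add hz (lat_intcast _)
    have h2 := hp1 _ hwL
    have h3 : z + (-(i:ℂ) - 1) + 1 = z + -(i:ℂ) := by ring
    rw [h3] at h2
    have h4 : f (z + -(i:ℂ)) = f z := by
      have h5 := ih z hz; push_cast at h5
      exact h5
    push_cast
    calc f (z + (-(i:ℂ) - 1)) = f (z + -(i:ℂ)) := h2.symm
      _ = f z := h4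

lemma shift_tau (hpτ : ∀ z ∉ LatSet τ, f (z + τ) = QQ lam * f z) :
    ∀ (n : ℤ), ∀ z ∉ LatSet τ, f (z + (n:ℂ) * τ) = QQ lam ^ n * f z := by
  intro n
  induction n using Int.induction_on with
  | zero => intro z _; simp
  | succ i ih =>
    intro z hz
    have hcast : (((i:ℤ) + 1 : ℤ) : ℂ) = ((i:ℤ):ℂ) + 1 := by push_cast; ring
    have hzi : z + ((i:ℤ):ℂ) * τ ∉ LatSet τ := notlat_add hz (lat_int_tau i)
    rw [hcast, show z + (((i:ℤ):ℂ) + 1) * τ = (z + ((i:ℤ):ℂ) * τ) + τ from by ring,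
      hpτ _ hzi, ih z hz, ← mul_assoc, mul_comm (QQ lam) (QQ lam ^ (i:ℤ)),
      ← zpow_add_one₀ (QQ_ne_zero lam)]
  | pred i ih =>
    intro z hz
    have hcast2 : ((-(i:ℤ) - 1 : ℤ):ℂ) = -(i:ℂ) - 1 := by push_cast; ring
    have hcast3 : ((-(i:ℤ) : ℤ):ℂ) = -(i:ℂ) := by push_cast; ring
    have hwL : z + (-(i:ℂ) - 1) * τ ∉ LatSet τ := by
      rw [← hcast2]; exact notlat_add hz (lat_int_tau _)
    have h2 := hpτ _ hwL
    have h3 : z + (-(i:ℂ) - 1) * τ + τ = z + -(i:ℂ) * τ := by ring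
    rw [h3] at h2
    have h4 : f (z + -(i:ℂ) * τ) = QQ lam ^ (-(i:ℤ)) * f z := by
      have h5 := ih z hz
      rw [hcast3] at h5
      exact h5
    have h6 : f (z + (-(i:ℂ) - 1) * τ) = (QQ lam)⁻¹ * f (z + -(i:ℂ) * τ) := by
      rw [h2, inv_mul_cancel_left₀ (QQ_ne_zero lam)]
    rw [hcast2, h6, h4, ← mul_assoc, ← zpow_neg_one (QQ lam),
      ← zpow_add₀ (QQ_ne_zero lam)]
    congr 2
    ring

lemma quasi_shift (hp1 : ∀ z ∉ LatSet τ, f (z + 1) = f z)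
    (hpτ : ∀ z ∉ LatSet τ, f (z + τ) = QQ lam * f z)
    (m n : ℤ) {z : ℂ} (hz : z ∉ LatSet τ) :
    f (z + ((m:ℂ) + (n:ℂ) * τ)) = QQ lam ^ n * f z := by
  have h1 : z + ((m:ℂ) + (n:ℂ) * τ) = (z + (n:ℂ) * τ) + (m:ℂ) := by ring
  rw [h1, shift_int hp1 m _ (notlat_add hz (lat_int_tau n)), shift_tau hpτ n z hz]

end Shifts

/-- Base case: a holomorphic element of `L_λ` vanishes. -/
lemma holo_case (hτ : 0 < τ.im) (hlam : lam ∉ LatSet τ) {f : ℂ → ℂ}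
    (hf1 : DifferentiableOn ℂ f (LatSet τ)ᶜ)
    (hp1 : ∀ z ∉ LatSet τ, f (z + 1) = f z)
    (hpτ : ∀ z ∉ LatSet τ, f (z + τ) = QQ lam * f z)
    {a : ℂ} (h0 : Tendsto f (𝓝[≠] (0:ℂ)) (𝓝 a)) :
    ∀ z ∉ LatSet τ, f z = 0 := by
  have tend_at : ∀ w ∈ LatSet τ, ∃ b, Tendsto f (𝓝[≠] w) (𝓝 b) := by
    rintro w ⟨m, n, rfl⟩
    refine ⟨QQ lam ^ n * a, ?_⟩
    have hmap : Tendsto (fun z => z - ((m:ℂ) + (n:ℂ) * τ))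
        (𝓝[≠] ((m:ℂ) + (n:ℂ) * τ)) (𝓝[≠] (0:ℂ)) := by
      apply tendsto_nhdsWithin_of_tendsto_nhds_of_eventually_within
      · have h7 : Tendsto (fun z : ℂ => z - ((m:ℂ) + (n:ℂ) * τ))
            (𝓝 ((m:ℂ) + (n:ℂ) * τ)) (𝓝 0) := by
          have h8 := (continuous_sub_right ((m:ℂ) + (n:ℂ) * τ)).tendsto ((m:ℂ) + (n:ℂ) * τ)
          simpa using h8
        exact h7.mono_left nhdsWithin_le_nhds
      · filter_upwards [self_mem_nhdsWithin] with z hz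
        exact sub_ne_zero.mpr hz
    have hev : ∀ᶠ z in 𝓝[≠] ((m:ℂ) + (n:ℂ) * τ),
        f z = QQ lam ^ n * f (z - ((m:ℂ) + (n:ℂ) * τ)) := by
      filter_upwards [notlat_eventually hτ] with z hz
      have h6 := quasi_shift hp1 hpτ m n (z := z - ((m:ℂ) + (n:ℂ) * τ)) hz.1
      rw [sub_add_cancel] at h6
      exact h6
    have hev2 : (fun z => QQ lam ^ n * f (z - ((m:ℂ) + (n:ℂ) * τ)))
        =ᶠ[𝓝[≠] ((m:ℂ) + (n:ℂ) * τ)] f := EventuallyEq.symm hev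
    exact Tendsto.congr' hev2 ((h0.comp hmap).const_mul _)
  set F : ℂ → ℂ := fun z => limUnder (𝓝[≠] z) f with hFdef
  have hFf : ∀ z ∉ LatSet τ, F z = f z := by
    intro z hz
    have hc : Tendsto f (𝓝[≠] z) (𝓝 (f z)) :=
      ((hf1.differentiableAt ((isOpen_notlat hτ).mem_nhds hz)).continuousAt).tendsto.mono_left
        nhdsWithin_le_nhds
    exact hc.limUnder_eq
  have hFtend : ∀ w ∈ LatSet τ, Tendsto f (𝓝[≠] w) (𝓝 (F w)) := by
    intro w hw
    obtain ⟨b, hb⟩ := tend_at w hw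
    have : F w = b := hb.limUnder_eq
    rw [this]; exact hb
  have hFdiff : Differentiable ℂ F := by
    intro w
    by_cases hw : w ∈ LatSet τ
    · have hb := hFtend w hw
      have hε : 0 < min 1 τ.im := lt_min one_pos hτ
      have hsub : DifferentiableOn ℂ f (Metric.ball w (min 1 τ.im) \ {w}) := by
        apply hf1.mono
        intro z hz
        exact notlat_ball hτ hw hz.1 (by simpa using hz.2)
      have hbd : (fun z => f z - f w) =o[𝓝[≠] w] fun z => (z - w)⁻¹ := by
        apply Filter.IsBoundedUnder.isLittleO_sub_self_inv
        exact ((hb.sub_const (f w)).norm).isBoundedUnder_le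
      have Hup := Complex.differentiableOn_update_limUnder_of_isLittleO
        (Metric.ball_mem_nhds w hε) hsub hbd
      have heq : F =ᶠ[𝓝 w] Function.update f w (limUnder (𝓝[≠] w) f) := by
        filter_upwards [Metric.ball_mem_nhds w hε] with z hzball
        rcases eq_or_ne z w with rfl | hne
        · rw [Function.update_self]
        · rw [Function.update_of_ne hne]
          exact hFf z (notlat_ball hτ hw hzball hne)
      exact (Hup.differentiableAt (Metric.ball_mem_nhds w hε)).congr_of_eventuallyEq heq
    · have heq : F =ᶠ[𝓝 w] f := by
        filter_upwards [(isOpen_notlat hτ).mem_nhds hw] with z hz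
        exact hFf z hz
      exact (hf1.differentiableAt
        ((isOpen_notlat hτ).mem_nhds hw)).congr_of_eventuallyEq heq
  have hcontF : Continuous F := hFdiff.continuous
  have hFp1 : ∀ z, F (z + 1) = F z := by
    have hE : Set.EqOn (fun z => F (z + 1)) F (LatSet τ)ᶜ := by
      intro z hz
      have hz1 : z + 1 ∉ LatSet τ := notlat_add hz lat_one
      show F (z + 1) = F z
      rw [hFf _ hz1, hFf _ hz, hp1 z hz]
    have := Continuous.ext_on (dense_notlat hτ)
      (hcontF.comp (continuous_add_right 1)) hcontF hE
    exact fun z => congrFun this z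
  have hFpτ : ∀ z, F (z + τ) = QQ lam * F z := by
    have hE : Set.EqOn (fun z => F (z + τ)) (fun z => QQ lam * F z) (LatSet τ)ᶜ := by
      intro z hz
      have hz1 : z + τ ∉ LatSet τ := notlat_add hz lat_tau
      show F (z + τ) = QQ lam * F z
      rw [hFf _ hz1, hFf _ hz, hpτ z hz]
    have := Continuous.ext_on (dense_notlat hτ)
      (hcontF.comp (continuous_add_right τ)) (continuous_const.mul hcontF) hE
    exact fun z => congrFun this z
  have hvanish := entire_vanish hτ hlam F hFdiff hFp1 hFpτ
  intro z hz
  rw [← hFf z hz]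
  exact hvanish z

/-- Main induction on the pole order. -/
lemma main_ind (hτ : 0 < τ.im) (hθ : IsTheta τ θ) (hlam : lam ∉ LatSet τ) :
    ∀ p : ℕ, ∀ f : ℂ → ℂ, ∀ a : ℂ,
      DifferentiableOn ℂ f (LatSet τ)ᶜ →
      (∀ z ∉ LatSet τ, f (z + 1) = f z) →
      (∀ z ∉ LatSet τ, f (z + τ) = QQ lam * f z) →
      MeromorphicAt f 0 →
      Tendsto (fun z => z ^ p * f z) (𝓝[≠] (0:ℂ)) (𝓝 a) →
      ∃ c : ℕ → ℂ, ∀ z ∉ LatSet τ,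
        f z = ∑ i ∈ Finset.range p, c i * iteratedDeriv i (gfun θ lam) z := by
  intro p
  induction p with
  | zero =>
    intro f a hdiff hp1 hpτ _ htend
    refine ⟨fun _ => 0, fun z hz => ?_⟩
    simp only [Finset.range_zero, Finset.sum_empty]
    have h0 : Tendsto f (𝓝[≠] (0:ℂ)) (𝓝 a) := by
      have : (fun z : ℂ => z ^ 0 * f z) = f := by funext z; simp
      rwa [this] at htend
    exact holo_case hτ hlam hdiff hp1 hpτ h0 z hz
  | succ p ih =>
    intro f a hdiff hp1 hpτ hmero htend
    have hlead0 : ((-1:ℂ) ^ p * (Nat.factorial p : ℂ) * θ lam) ≠ 0 := lead_ne hθ hlam p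
    set lead : ℂ := (-1:ℂ) ^ p * (Nat.factorial p : ℂ) * θ lam with hlead
    set c₀ : ℂ := a / lead with hc₀
    set f' : ℂ → ℂ := fun z => f z - c₀ * iteratedDeriv p (gfun θ lam) z with hf'
    have htend' : Tendsto (fun z => z ^ (p+1) * f' z) (𝓝[≠] (0:ℂ)) (𝓝 0) := by
      have h1 := htend.sub ((D_tendsto hθ hlam p).const_mul c₀)
      have h3 : (fun z : ℂ => z ^ (p+1) * f z - c₀ * (z ^ (p+1) *
          iteratedDeriv p (gfun θ lam) z)) = fun z => z ^ (p+1) * f' z := by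
        funext z; simp only [hf']; ring
      have h2 : a - c₀ * lead = 0 := by
        rw [hc₀, div_mul_cancel₀ _ hlead0, sub_self]
      rw [h3, h2] at h1
      exact h1
    have hmero' : MeromorphicAt f' 0 := by
      have := hmero.sub ((MeromorphicAt.const c₀ 0).mul (D_mero hθ hlam p))
      exact this
    obtain ⟨b, htp⟩ := order_step hmero' p htend'
    have hdiff' : DifferentiableOn ℂ f' (LatSet τ)ᶜ :=
      hdiff.sub ((differentiableOn_const c₀).mul (D_diffOn hτ hθ p))
    have hp1' : ∀ z ∉ LatSet τ, f' (z + 1) = f' z := by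
      intro z hz
      simp only [hf']
      rw [hp1 z hz, D_per1 hτ hθ p z hz]
    have hpτ' : ∀ z ∉ LatSet τ, f' (z + τ) = QQ lam * f' z := by
      intro z hz
      simp only [hf']
      rw [hpτ z hz, D_pertau hτ hθ p z hz]
      ring
    obtain ⟨cc, hcc⟩ := ih f' b hdiff' hp1' hpτ' hmero' htp
    refine ⟨fun i => if i = p then c₀ else cc i, fun z hz => ?_⟩
    rw [Finset.sum_range_succ]
    have hsum : ∑ i ∈ Finset.range p,
        (if i = p then c₀ else cc i) * iteratedDeriv i (gfun θ lam) z
        = ∑ i ∈ Finset.range p, cc i * iteratedDeriv i (gfun θ lam) z := by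
      refine Finset.sum_congr rfl fun i hi => ?_
      rw [if_neg (Nat.ne_of_lt (Finset.mem_range.mp hi))]
    rw [hsum, ← hcc z hz]
    simp only [hf', ↓reduceIte]
    ring

/-- Linear independence. -/
lemma indep (hτ : 0 < τ.im) (hθ : IsTheta τ θ) (hlam : lam ∉ LatSet τ) :
    ∀ (n : ℕ) (c : ℕ → ℂ),
      (∀ z ∉ LatSet τ, ∑ i ∈ Finset.range n, c i * iteratedDeriv i (gfun θ lam) z = 0) →
      ∀ i < n, c i = 0 := by
  intro n
  induction n with
  | zero => intro c _ i hi; exact absurd hi (Nat.not_lt_zero i)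
  | succ n ih =>
    intro c hc
    have hev0 : ∀ᶠ z in 𝓝[≠] (0:ℂ), z ∉ LatSet τ := lat_eventually_notlat hτ lat_zero
    have hcn : c n = 0 := by
      have hTi : ∀ i ∈ Finset.range (n+1),
          Tendsto (fun z : ℂ => z ^ (n+1) * (c i * iteratedDeriv i (gfun θ lam) z))
            (𝓝[≠] (0:ℂ))
            (𝓝 (if i = n then c n * ((-1:ℂ) ^ n * (Nat.factorial n : ℂ) * θ lam) else 0)) := by
        intro i hi
        have hin : i ≤ n := Nat.lt_succ_iff.mp (Finset.mem_range.mp hi)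
        have hfun : (fun z : ℂ => z ^ (n+1) * (c i * iteratedDeriv i (gfun θ lam) z))
            = fun z => c i * (z ^ (n-i) *
              (z ^ (i+1) * iteratedDeriv i (gfun θ lam) z)) := by
          funext z
          have hpow : z ^ (n-i) * z ^ (i+1) = z ^ (n+1) := by
            rw [← pow_add]; congr 1; omega
          calc z ^ (n+1) * (c i * iteratedDeriv i (gfun θ lam) z)
              = c i * ((z ^ (n-i) * z ^ (i+1)) * iteratedDeriv i (gfun θ lam) z) := by
                rw [hpow]; ring
            _ = c i * (z ^ (n-i) * (z ^ (i+1) * iteratedDeriv i (gfun θ lam) z)) := by ring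
        rw [hfun]
        have hzp : Tendsto (fun z : ℂ => z ^ (n-i)) (𝓝[≠] (0:ℂ)) (𝓝 ((0:ℂ) ^ (n-i))) :=
          ((continuous_pow (n-i)).tendsto 0).mono_left nhdsWithin_le_nhds
        have hprod := (hzp.mul (D_tendsto hθ hlam i)).const_mul (c i)
        rcases eq_or_ne i n with heq | hne
        · rw [if_pos heq, ← heq]
          have hii : n - i = 0 := by omega
          simpa [hii] using hprod
        · rw [if_neg hne]
          have hpos : 0 < n - i := by omega
          have : (0:ℂ) ^ (n-i) = 0 := zero_pow (by omega)
          rw [this] at hprod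
          simpa using hprod
      have hsumT := tendsto_finset_sum (Finset.range (n+1)) hTi
      have hval : ∑ i ∈ Finset.range (n+1),
          (if i = n then c n * ((-1:ℂ) ^ n * (Nat.factorial n : ℂ) * θ lam) else 0)
          = c n * ((-1:ℂ) ^ n * (Nat.factorial n : ℂ) * θ lam) := by
        rw [Finset.sum_ite_eq' (Finset.range (n+1)) n]
        simp
      rw [hval] at hsumT
      have hzeroT : Tendsto (fun z : ℂ => ∑ i ∈ Finset.range (n+1),
          z ^ (n+1) * (c i * iteratedDeriv i (gfun θ lam) z)) (𝓝[≠] (0:ℂ)) (𝓝 0) := by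
        refine Tendsto.congr' ?_ tendsto_const_nhds
        filter_upwards [hev0] with z hz
        rw [← Finset.mul_sum]
        have hs := hc z hz
        rw [show ∑ i ∈ Finset.range (n+1), c i * iteratedDeriv i (gfun θ lam) z = 0 from hs,
          mul_zero]
      have := tendsto_nhds_unique hsumT hzeroT
      rcases mul_eq_zero.mp this with h | h
      · exact h
      · exact absurd h (lead_ne hθ hlam n)
    have hsum' : ∀ z ∉ LatSet τ,
        ∑ i ∈ Finset.range n, c i * iteratedDeriv i (gfun θ lam) z = 0 := by
      intro z hz
      have hs := hc z hz
      rw [Finset.sum_range_succ, hcn, zero_mul, add_zero] at hs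
      exact hs
    intro i hi
    rcases Nat.lt_succ_iff_lt_or_eq.mp hi with h | h
    · exact ih c hsum' i h
    · rw [h]; exact hcn

end LLaux

/-- Characterization of the space `L_λ` for `λ ∉ L`: a function holomorphic on `ℂ∖L`,
meromorphic on `ℂ` with poles in `L`, satisfies the quasi-periodicity
`f(z+1) = f(z)`, `f(z+τ) = e^{−2iπλ} f(z)` iff it is a finite linear combination of the
derivatives `(d/dz)^i (θ(λ+z)/θ(z))`; moreover these derivatives are linearly independent. -/
theorem Llambda_characterization
    (τ : ℂ) (hτ : 0 < τ.im) (θ : ℂ → ℂ) (hθ : IsTheta τ θ)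
    (lam : ℂ) (hlam : lam ∉ LatSet τ)
    (f : ℂ → ℂ) (hf1 : DifferentiableOn ℂ f (LatSet τ)ᶜ)
    (hf2 : MeromorphicOn f Set.univ) :
    (((∀ z ∉ LatSet τ, f (z + 1) = f z) ∧
        (∀ z ∉ LatSet τ, f (z + τ) = Complex.exp (-(2 * (Real.pi : ℂ) * Complex.I * lam)) * f z))
      ↔ ∃ (n : ℕ) (c : ℕ → ℂ), ∀ z ∉ LatSet τ,
          f z = ∑ i ∈ Finset.range n,
            c i * iteratedDeriv i (fun w => θ (lam + w) / θ w) z) ∧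
    (∀ (n : ℕ) (c : ℕ → ℂ),
      (∀ z ∉ LatSet τ,
        ∑ i ∈ Finset.range n, c i * iteratedDeriv i (fun w => θ (lam + w) / θ w) z = 0) →
      ∀ i < n, c i = 0) := by
  have hQQ : Complex.exp (-(2 * (Real.pi : ℂ) * Complex.I * lam)) = LLaux.QQ lam := rfl
  have hgf : (fun w => θ (lam + w) / θ w) = LLaux.gfun θ lam := rfl
  rw [hQQ, hgf]
  constructor
  · constructor
    · rintro ⟨hper1, hpertau⟩
      have hmero0 : MeromorphicAt f 0 := hf2 0 (Set.mem_univ 0)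
      obtain ⟨p, a, ht⟩ := LLaux.init_tendsto hmero0
      obtain ⟨c, hcs⟩ := LLaux.main_ind hτ hθ hlam p f a hf1 hper1 hpertau hmero0 ht
      exact ⟨p, c, hcs⟩
    · rintro ⟨n, c, hrep⟩
      constructor
      · intro z hz
        have hz1 : z + 1 ∉ LatSet τ := LLaux.notlat_add hz LLaux.lat_one
        rw [hrep z hz, hrep (z + 1) hz1]
        refine Finset.sum_congr rfl fun i _ => ?_
        rw [LLaux.D_per1 hτ hθ i z hz]
      · intro z hz
        have hzτ : z + τ ∉ LatSet τ := LLaux.notlat_add hz LLaux.lat_tau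
        rw [hrep z hz, hrep (z + τ) hzτ, Finset.mul_sum]
        refine Finset.sum_congr rfl fun i _ => ?_
        rw [LLaux.D_pertau hτ hθ i z hz]
        ring
  · exact LLaux.indep hτ hθ hlam
end
end

section
/- Let λ ∈ ℂ with λ ∉ L. If f : ℂ → ℂ is entire and satisfies f(z+1) = f(z) and f(z+τ) = e^{−2iπλ} f(z) for all z ∈ ℂ, then f is identically zero. (Equivalently, the space L_λ of quasi-periodic functions intersects the space of functions regular at all lattice points only in 0, so the decomposition k = 𝒪 ⊕ L_λ is direct.) -/
noncomputable section
open Complex Matrix Kronecker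

/-- An entire function with `f(z+1) = f(z)` and `f(z+τ) = e^{−2iπλ} f(z)` for `λ ∉ L`
vanishes identically: the space `L_λ` meets the space of entire functions only in `0`. -/
theorem entire_quasiperiodic_eq_zero
    (τ : ℂ) (hτ : 0 < τ.im) (lam : ℂ) (hlam : lam ∉ LatSet τ)
    (f : ℂ → ℂ) (hf : Differentiable ℂ f)
    (h1 : ∀ z : ℂ, f (z + 1) = f z)
    (h2 : ∀ z : ℂ, f (z + τ) = Complex.exp (-(2 * (Real.pi : ℂ) * Complex.I * lam)) * f z) :
    f = 0 := by
  set π : ℝ := Real.pi with hπ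
  set β : ℝ := lam.im / τ.im with hβ
  set α : ℝ := lam.re - β * τ.re with hα
  have hτ0 : τ.im ≠ 0 := ne_of_gt hτ
  have hlamdec : lam = (α : ℂ) + (β : ℂ) * τ := by
    apply Complex.ext <;> simp [hα, hβ] <;> field_simp
  set u : ℂ := Complex.exp (2 * (π : ℂ) * Complex.I * (β : ℂ)) with hu
  set v : ℂ := Complex.exp (-(2 * (π : ℂ) * Complex.I * (α : ℂ))) with hv
  set g : ℂ → ℂ := fun z => Complex.exp (2 * (π : ℂ) * Complex.I * (β : ℂ) * z) * f z with hg
  have hgd : Differentiable ℂ g := by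
    apply Differentiable.mul _ hf
    exact (differentiable_const _|>.mul differentiable_id).cexp
  have hg1 : ∀ z, g (z + 1) = u * g z := by
    intro z
    simp only [hg, h1, hu]
    rw [show 2 * (π : ℂ) * Complex.I * (β : ℂ) * (z + 1)
        = 2 * (π : ℂ) * Complex.I * (β : ℂ) + 2 * (π : ℂ) * Complex.I * (β : ℂ) * z by ring,
      Complex.exp_add]
    ring
  have hg2 : ∀ z, g (z + τ) = v * g z := by
    intro z
    simp only [hg, h2, hv]
    rw [← mul_assoc, ← mul_assoc, ← Complex.exp_add, ← Complex.exp_add]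
    congr 2
    rw [hlamdec]
    ring
  have habsu : ‖u‖ = 1 := by
    rw [hu, Complex.norm_exp]
    norm_num [Complex.mul_re, Complex.mul_im]
  have habsv : ‖v‖ = 1 := by
    rw [hv, Complex.norm_exp]
    norm_num [Complex.mul_re, Complex.mul_im]
  set h : ℂ → ℝ := fun z => ‖g z‖ with hh
  have hp1 : Function.Periodic h 1 := by
    intro z; simp only [hh, hg1, norm_mul, habsu, one_mul]
  have hp2 : Function.Periodic h τ := by
    intro z; simp only [hh, hg2, norm_mul, habsv, one_mul]
  set K : Set ℂ := Set.Icc (0:ℝ) 1 ×ℂ Set.Icc 0 τ.im with hK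
  have hKc : IsCompact K := by
    apply Metric.isCompact_of_isClosed_isBounded
    · exact (isClosed_Icc).reProdIm isClosed_Icc
    · exact (Metric.isBounded_Icc _ _).reProdIm (Metric.isBounded_Icc _ _)
  obtain ⟨C, hC⟩ := hKc.exists_bound_of_continuousOn (hgd.continuous.continuousOn)
  have hbound : ∀ z, ‖g z‖ ≤ C := by
    intro z
    obtain ⟨n, hn⟩ : ∃ n : ℤ, n = ⌊z.im / τ.im⌋ := ⟨_, rfl⟩
    obtain ⟨m, hm⟩ : ∃ m : ℤ, m = ⌊(z - (n : ℂ) * τ).re⌋ := ⟨_, rfl⟩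
    have key : h z = h (z - m - n * τ) := by
      have e2 : h ((z - m) - (n:ℂ) * τ) = h (z - (m:ℂ)) := (hp2.int_mul n).sub_eq (z - (m:ℂ))
      have e1 : h (z - (m:ℂ) * 1) = h z := (hp1.int_mul m).sub_eq z
      rw [mul_one] at e1
      rw [e2, e1]
    have hwK : z - m - n * τ ∈ K := by
      rw [Complex.mem_reProdIm]
      have hre : (z - m - n * τ).re = (z - (n:ℂ) * τ).re - m := by
        simp [Complex.sub_re]; ring
      have him : (z - m - n * τ).im = z.im - n * τ.im := by
        simp [Complex.sub_im, Complex.mul_im]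
      have f1 := Int.floor_le (z - (n:ℂ) * τ).re
      have f2 := Int.lt_floor_add_one (z - (n:ℂ) * τ).re
      rw [← hm] at f1 f2
      have f3 := Int.floor_le (z.im / τ.im)
      have f4 := Int.lt_floor_add_one (z.im / τ.im)
      rw [← hn] at f3 f4
      have f3' : (n:ℝ) * τ.im ≤ z.im := (le_div_iff₀ hτ).mp f3
      have f4' : z.im < ((n:ℝ) + 1) * τ.im := by
        have := (div_lt_iff₀ hτ).mp f4
        linarith
      constructor
      · rw [hre]; constructor <;> [linarith; linarith]
      · rw [him]; constructor <;> [linarith; nlinarith]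
    calc ‖g z‖ = h z := by rw [hh]
      _ = h (z - m - n * τ) := key
      _ = ‖g (z - m - n * τ)‖ := by rw [hh]
      _ ≤ C := hC _ hwK
  have hconst : ∀ z, g z = g 0 := by
    intro z
    apply hgd.apply_eq_apply_of_bounded
    apply isBounded_iff_forall_norm_le.2 ⟨C, ?_⟩
    rintro x ⟨z, rfl⟩
    exact hbound z
  have hg0 : g 0 = 0 := by
    by_contra hne
    have hu1 : u = 1 := by
      have e : g 0 = u * g 0 := by rw [← hg1 0, hconst (0 + 1)]
      have : (u - 1) * g 0 = 0 := by rw [sub_mul, one_mul, ← e, sub_self]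
      rcases mul_eq_zero.mp this with h' | h'
      · exact sub_eq_zero.mp h'
      · exact absurd h' hne
    have hv1 : v = 1 := by
      have e : g 0 = v * g 0 := by rw [← hg2 0, hconst (0 + τ)]
      have : (v - 1) * g 0 = 0 := by rw [sub_mul, one_mul, ← e, sub_self]
      rcases mul_eq_zero.mp this with h' | h'
      · exact sub_eq_zero.mp h'
      · exact absurd h' hne
    obtain ⟨nb, hnb⟩ := Complex.exp_eq_one_iff.mp hu1
    obtain ⟨na, hna⟩ := Complex.exp_eq_one_iff.mp hv1
    have h2πI : (2 * (π : ℂ) * Complex.I) ≠ 0 := by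
      simp [hπ, Complex.ext_iff, Real.pi_ne_zero]
    have hβz : (β : ℂ) = nb := mul_left_cancel₀ h2πI (by linear_combination hnb)
    have hαz : (α : ℂ) = -na := mul_left_cancel₀ h2πI (by linear_combination -hna)
    exact hlam ⟨-na, nb, by rw [hlamdec, hβz, hαz]; push_cast; ring⟩
  have hz : ∀ z, g z = 0 := fun z => (hconst z).trans hg0
  funext z
  have hz' := hz z
  simp only [hg] at hz'
  rcases mul_eq_zero.mp hz' with h' | h'
  · exact absurd h' (Complex.exp_ne_zero _)
  · simpa using h'
end
end
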